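/- arXiv:2111.04034 — 11 statements merged into one kernel-verified Lean document; each statement's English description precedes it below -/
import Mathlib

section
/- Let p < q be distinct primes, and let p̄, q̄ be the unique positive integers with p·p̄ + q·q̄ = pq + 1. Then Φ_{pq}(X) = (∑_{i=0}^{p̄-1} X^{pi})(∑_{j=0}^{q̄-1} X^{qj}) − X(∑_{i=0}^{q-p̄-1} X^{pi})(∑_{j=0}^{p-q̄-1} X^{qj}). -/
/-!
Both sides become `(X ^ (p * q) - 1) * (X - 1)` after multiplication by the non-zero-divisor
`(X ^ p - 1) * (X ^ q - 1)`. On the left this follows from `Φ_q(X ^ p) = Φ_{pq} Φ_q` and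
`Φ_q (X - 1) = X ^ q - 1`. On the right each geometric sum telescopes, e.g. to `X ^ (p * pbar) - 1`, and the relation
`p * pbar + q * qbar = p * q + 1` makes the mixed exponents of the two products coincide,
`1 + p * (q - pbar) = q * qbar` and `1 + q * (p - qbar) = p * pbar`, so that they cancel.
-/

open Polynomial

namespace Polynomial

variable {R : Type*} [CommRing R]

theorem cyclotomic_prime_mul_prime_mul_X_pow_sub_one {p q : ℕ} (hp : p.Prime) (hq : q.Prime)
    (hpq : p ≠ q) :
    cyclotomic (p * q) R * ((X ^ p - 1) * (X ^ q - 1)) = (X ^ (p * q) - 1) * (X - 1) := by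
  have := Fact.mk hq
  have hexpand : expand R p (cyclotomic q R) = cyclotomic (p * q) R * cyclotomic q R := by
    rw [cyclotomic_expand_eq_cyclotomic_mul hp ((Nat.prime_dvd_prime_iff_eq hp hq).not.2 hpq),
      mul_comm q]
  calc cyclotomic (p * q) R * ((X ^ p - 1) * (X ^ q - 1))
      = expand R p (cyclotomic q R * (X - 1)) * (X - 1) := by
        rw [← cyclotomic_prime_mul_X_sub_one R q, map_mul, hexpand]
        simp only [expand_X, map_sub, map_one]
        ring
    _ = (X ^ (p * q) - 1) * (X - 1) := by
        rw [cyclotomic_prime_mul_X_sub_one, map_sub, map_pow, expand_X, map_one, ← pow_mul]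

theorem geom_sum_X_pow_mul_mul_X_pow_sub_one (n k : ℕ) :
    (∑ i ∈ Finset.range n, (X : R[X]) ^ (k * i)) * (X ^ k - 1) = X ^ (k * n) - 1 := by
  simp_rw [pow_mul]
  exact geom_sum_mul _ _

theorem geom_sum_pow_mul_sub_X_mul_geom_sum_pow_mul {p q a b : ℕ} (ha : a ≤ q) (hb : b ≤ p)
    (h : p * a + q * b = p * q + 1) :
    ((∑ i ∈ Finset.range a, (X : R[X]) ^ (p * i)) * (∑ j ∈ Finset.range b, X ^ (q * j)) -
        X * (∑ i ∈ Finset.range (q - a), X ^ (p * i)) *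
          (∑ j ∈ Finset.range (p - b), X ^ (q * j))) * ((X ^ p - 1) * (X ^ q - 1)) =
      (X ^ (p * q) - 1) * (X - 1) := by
  have hpa : 1 + p * (q - a) = q * b := by zify [ha] at h ⊢; linarith
  have hqb : 1 + q * (p - b) = p * a := by zify [hb] at h ⊢; linarith
  have hpq : p * q = 1 + p * (q - a) + q * (p - b) := by linarith
  calc _ = ((∑ i ∈ Finset.range a, (X : R[X]) ^ (p * i)) * (X ^ p - 1)) *
          ((∑ j ∈ Finset.range b, X ^ (q * j)) * (X ^ q - 1)) -
          X * (((∑ i ∈ Finset.range (q - a), X ^ (p * i)) * (X ^ p - 1)) *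
            ((∑ j ∈ Finset.range (p - b), X ^ (q * j)) * (X ^ q - 1))) := by ring
    _ = (X ^ (p * a) - 1) * (X ^ (q * b) - 1) -
          X * ((X ^ (p * (q - a)) - 1) * (X ^ (q * (p - b)) - 1)) := by
        simp only [geom_sum_X_pow_mul_mul_X_pow_sub_one]
    _ = (X ^ (p * q) - 1) * (X - 1) := by
        rw [hpq, ← hpa, ← hqb]
        ring

end Polynomial

theorem cyclotomic_binary_formula_general (p q pbar qbar : ℕ) (hp : p.Prime) (hq : q.Prime)
    (h : p * pbar + q * qbar = p * q + 1) :
    cyclotomic (p * q) ℤ =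
      (∑ i ∈ Finset.range pbar, X ^ (p * i)) * (∑ j ∈ Finset.range qbar, X ^ (q * j)) -
        X * (∑ i ∈ Finset.range (q - pbar), X ^ (p * i)) *
          (∑ j ∈ Finset.range (p - qbar), X ^ (q * j)) := by
  have hp2 := hp.two_le
  have hq2 := hq.two_le
  have hpq : p ≠ q := by
    rintro rfl
    have hdvd : p ∣ p * p + 1 := h ▸ ⟨pbar + qbar, by ring⟩
    exact hp.not_dvd_one ((Nat.dvd_add_right (dvd_mul_right p p)).1 hdvd)
  have hpbar : pbar ≤ q := by nlinarith
  have hqbar : qbar ≤ p := by nlinarith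
  have hne : ((X : ℤ[X]) ^ p - 1) * (X ^ q - 1) ≠ 0 :=
    mul_ne_zero (X_pow_sub_C_ne_zero hp.pos 1) (X_pow_sub_C_ne_zero hq.pos 1)
  refine mul_right_cancel₀ hne ?_
  rw [cyclotomic_prime_mul_prime_mul_X_pow_sub_one hp hq hpq,
    geom_sum_pow_mul_sub_X_mul_geom_sum_pow_mul hpbar hqbar h]

theorem cyclotomic_binary_formula (p q pbar qbar : ℕ) (hp : p.Prime) (hq : q.Prime)
    (hpq : p < q) (hpbar : 1 ≤ pbar) (hqbar : 1 ≤ qbar)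
    (h : p * pbar + q * qbar = p * q + 1) :
    cyclotomic (p * q) ℤ =
      (∑ i ∈ Finset.range pbar, X ^ (p * i)) * (∑ j ∈ Finset.range qbar, X ^ (q * j)) -
        X * (∑ i ∈ Finset.range (q - pbar), X ^ (p * i)) *
          (∑ j ∈ Finset.range (p - qbar), X ^ (q * j)) :=
  cyclotomic_binary_formula_general p q pbar qbar hp hq h
end

section
/- For all distinct primes p and q, every coefficient of the binary cyclotomic polynomial Φ_{pq}(X) lies in {-1, 0, 1}. -/
/-!
Lam–Leung. Since `(p - 1) * (q - 1)` exceeds the Frobenius number `p * q - p - q`, it equals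
`r * p + s * q`, and then `r < q`, `s < p`. From `Φ_{pq} (X^p - 1) (X^q - 1) = (X^{pq} - 1) (X - 1)`
one gets
`Φ_{pq} = (∑_{i ≤ r} X^{ip}) (∑_{j ≤ s} X^{jq}) - X^{-pq} (∑_{r<i<q} X^{ip}) (∑_{s<j<p} X^{jq})`.
As `i < q` in both products, the exponents `i p + j q` are pairwise distinct, so each product has
coefficients in `{0, 1}`, and their difference has coefficients in `{-1, 0, 1}`.
-/

open Polynomial Finset

lemma Nat.exists_lt_mul_add_mul_eq_sub_one_mul_sub_one {p q : ℕ} (hpq : p.Coprime q) (hp : 1 < p)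
    (hq : 1 < q) : ∃ r s, r < q ∧ r * p + s * q = (p - 1) * (q - 1) := by
  obtain ⟨r, s, hrs⟩ : ∃ r s : ℕ, r • p + s • q = (p - 1) * (q - 1) := by
    rw [← AddSubmonoid.mem_closure_pair]
    by_contra h
    have := (frobeniusNumber_pair hpq hp hq).2 h
    obtain ⟨a, rfl⟩ := Nat.exists_eq_add_of_lt hp
    obtain ⟨b, rfl⟩ := Nat.exists_eq_add_of_lt hq
    simp only [Nat.add_sub_cancel] at this
    ring_nf at this
    omega
  simp only [smul_eq_mul] at hrs
  have hlt : (p - 1) * (q - 1) < p * q := Nat.mul_lt_mul'' (by omega) (by omega)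
  exact ⟨r, s, Nat.lt_of_mul_lt_mul_right (a := p) (by rw [mul_comm q p]; omega), hrs⟩

lemma Nat.eq_and_eq_of_mul_add_mul_eq {p q i i' j j' : ℕ} (hpq : p.Coprime q) (hi : i < q)
    (hi' : i' < q) (h : p * i + q * j = p * i' + q * j') : i = i' ∧ j = j' := by
  obtain rfl : i = i' := by
    have : i * p ≡ i' * p [MOD q] := by
      simpa [Nat.ModEq, Nat.mul_add_mod, mul_comm] using congrArg (· % q) h
    exact (Nat.ModEq.cancel_right_of_coprime hpq.symm this).eq_of_lt_of_lt hi hi'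
  exact ⟨rfl, Nat.eq_of_mul_eq_mul_left (by omega) (Nat.add_left_cancel h)⟩

namespace Polynomial

lemma coeff_sum_X_pow_mem {R ι : Type*} [Semiring R] {s : Finset ι} {e : ι → ℕ}
    (he : Set.InjOn e s) (n : ℕ) : (∑ i ∈ s, (X : R[X]) ^ e i).coeff n ∈ ({0, 1} : Set R) := by
  simp only [finsetSum_coeff, coeff_X_pow, sum_boole]
  have : #{i ∈ s | n = e i} ≤ 1 := card_le_one.2 fun a ha b hb => by
    rw [mem_filter] at ha hb
    exact he ha.1 hb.1 (ha.2.symm.trans hb.2)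
  interval_cases #{i ∈ s | n = e i} <;> simp

lemma coeff_geom_sum_mul_geom_sum_mem {R : Type*} [Semiring R] {p q : ℕ} (hpq : p.Coprime q)
    {s t : Finset ℕ} (hs : ∀ i ∈ s, i < q) (n : ℕ) :
    ((∑ i ∈ s, (X ^ p : R[X]) ^ i) * ∑ j ∈ t, (X ^ q : R[X]) ^ j).coeff n ∈ ({0, 1} : Set R) := by
  simp only [sum_mul_sum, ← sum_product', ← pow_mul, ← pow_add]
  refine coeff_sum_X_pow_mem (fun ⟨i, j⟩ hij ⟨i', j'⟩ hij' h => ?_) n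
  simp only [coe_product, Set.mem_prod, mem_coe] at hij hij'
  obtain ⟨rfl, rfl⟩ := Nat.eq_and_eq_of_mul_add_mul_eq hpq (hs i hij.1) (hs i' hij'.1) h
  rfl

lemma cyclotomic_prime_mul_prime_mul_X_pow_sub_one_mul {p q : ℕ} (hp : p.Prime) (hq : q.Prime)
    (hne : p ≠ q) (R : Type*) [CommRing R] :
    cyclotomic (p * q) R * ((X ^ p - 1) * (X ^ q - 1)) = (X ^ (p * q) - 1) * (X - 1) := by
  have := Fact.mk hq
  have hq' := cyclotomic_prime_mul_X_sub_one R q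
  have hexp := congrArg (expand R p) hq'
  rw [map_mul, cyclotomic_expand_eq_cyclotomic_mul hp (by rwa [Nat.prime_dvd_prime_iff_eq hp hq])]
    at hexp
  simp only [map_sub, map_pow, expand_X, map_one, ← pow_mul, mul_comm q p] at hexp
  linear_combination (X - 1) * hexp - cyclotomic (p * q) R * (X ^ p - 1) * hq'

theorem cyclotomic_mul_X_pow_eq_sub {p q r s : ℕ} (hp : p.Prime) (hq : q.Prime) (hne : p ≠ q)
    (hrs : r * p + s * q = (p - 1) * (q - 1)) (R : Type*) [CommRing R] :
    cyclotomic (p * q) R * X ^ (p * q) =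
      (∑ i ∈ range (r + 1), (X ^ p : R[X]) ^ i) * (∑ j ∈ range (s + 1), (X ^ q : R[X]) ^ j) *
          X ^ (p * q) -
        (∑ i ∈ Ico (r + 1) q, (X ^ p : R[X]) ^ i) * ∑ j ∈ Ico (s + 1) p, (X ^ q : R[X]) ^ j := by
  have hsum : (r + 1) * p + (s + 1) * q = p * q + 1 := by
    obtain ⟨a, rfl⟩ := Nat.exists_eq_add_of_lt hp.one_lt
    obtain ⟨b, rfl⟩ := Nat.exists_eq_add_of_lt hq.one_lt
    simp only [Nat.add_sub_cancel] at hrs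
    linear_combination hrs
  have hr : r + 1 ≤ q := by nlinarith [hp.two_le, hq.two_le]
  have hs : s + 1 ≤ p := by nlinarith [hp.two_le, hq.two_le]
  have hmonic : ((X ^ p - 1 : R[X]) * (X ^ q - 1)).Monic := by
    simpa using (monic_X_pow_sub_C (1 : R) hp.ne_zero).mul (monic_X_pow_sub_C (1 : R) hq.ne_zero)
  apply hmonic.isRegular.right
  set x : R[X] := X ^ p
  set y : R[X] := X ^ q
  have hxq : x ^ q = X ^ (p * q) := (pow_mul _ _ _).symm
  have hyp : y ^ p = X ^ (p * q) := by rw [← pow_mul, mul_comm]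
  have hxy : x ^ (r + 1) * y ^ (s + 1) = X ^ (p * q) * X := by
    rw [← pow_mul, ← pow_mul, ← pow_add, mul_comm p, mul_comm q, hsum, pow_succ]
  have gx := geom_sum_mul x (r + 1)
  have gy := geom_sum_mul y (s + 1)
  have hx := geom_sum_Ico_mul x hr
  have hy := geom_sum_Ico_mul y hs
  rw [hxq] at hx
  rw [hyp] at hy
  -- with `a = x ^ (r + 1)`, `b = y ^ (s + 1)`, `N = X ^ (p * q)`, the two sides differ by
  -- `(1 - N) * (a * b - N * X)`, which vanishes since `r * p + s * q + p + q = p * q + 1`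
  linear_combination X ^ (p * q) * cyclotomic_prime_mul_prime_mul_X_pow_sub_one_mul hp hq hne R
    - X ^ (p * q) * (∑ j ∈ range (s + 1), y ^ j) * (y - 1) * gx
    - X ^ (p * q) * (x ^ (r + 1) - 1) * gy
    + (∑ j ∈ Ico (s + 1) p, y ^ j) * (y - 1) * hx + (X ^ (p * q) - x ^ (r + 1)) * hy
    + (1 - X ^ (p * q)) * hxy

end Polynomial

theorem cyclotomic_binary_coeff_mem (p q : ℕ) (hp : p.Prime) (hq : q.Prime) (hne : p ≠ q)
    (j : ℕ) : (cyclotomic (p * q) ℤ).coeff j ∈ ({-1, 0, 1} : Set ℤ) := by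
  have hpq : p.Coprime q := (Nat.coprime_primes hp hq).2 hne
  obtain ⟨r, s, hr, hrs⟩ :=
    Nat.exists_lt_mul_add_mul_eq_sub_one_mul_sub_one hpq hp.one_lt hq.one_lt
  have hA := coeff_geom_sum_mul_geom_sum_mem (R := ℤ) hpq (s := range (r + 1))
    (t := range (s + 1)) (fun i hi => by rw [mem_range] at hi; omega) j
  have hB := coeff_geom_sum_mul_geom_sum_mem (R := ℤ) hpq (s := Ico (r + 1) q)
    (t := Ico (s + 1) p) (fun i hi => (mem_Ico.1 hi).2) (j + p * q)
  have hΦ := congrArg (coeff · (j + p * q)) (cyclotomic_mul_X_pow_eq_sub hp hq hne hrs ℤ)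
  simp only [coeff_sub, coeff_mul_X_pow] at hΦ
  simp only [Set.mem_insert_iff, Set.mem_singleton_iff] at hA hB
  rcases hA with hA | hA <;> rcases hB with hB | hB <;> simp [hΦ, hA, hB]
end

section
/- Let p < q be distinct primes and let p̄ ∈ [1, q-1] and q̄ ∈ [1, p-1] be the inverses of p mod q and q mod p respectively. Then the number of nonzero coefficients of Φ_{pq}(X) equals 2·p̄·q̄ − 1. -/
/-!
Lam and Leung: with `p * p̄ + q * q̄ = p * q + 1`, multiplying by `(X ^ p - 1) * (X ^ q - 1)` and
telescoping shows

  `Φ_{pq} = (∑_{i < p̄} X^{ip}) (∑_{j < q̄} X^{jq}) - X (∑_{i < q - p̄} X^{ip}) (∑_{j < p - q̄} X^{jq})`.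

Since `p` and `q` are coprime, the numbers `i * p + j * q` with `i < q` are pairwise distinct, and
the exponents of the two products are disjoint. So `Φ_{pq}` has exactly
`p̄ q̄ + (q - p̄)(p - q̄) = 2 p̄ q̄ - 1` nonzero coefficients, all equal to `±1`.
-/

open Polynomial Finset

section Arithmetic

variable {p q a b : ℕ}

lemma coprime_of_mul_add_mul_eq (h : p * a + q * b = p * q + 1) : p.Coprime q := by
  have hdvd : p.gcd q ∣ p * a + q * b :=
    dvd_add (dvd_mul_of_dvd_left (p.gcd_dvd_left q) a) (dvd_mul_of_dvd_left (p.gcd_dvd_right q) b)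
  rw [h] at hdvd
  exact Nat.dvd_one.mp ((Nat.dvd_add_right (dvd_mul_of_dvd_left (p.gcd_dvd_left q) q)).mp hdvd)

lemma le_and_le_of_mul_add_mul_eq (hp : 1 < p) (hq : 1 < q) (h : p * a + q * b = p * q + 1) :
    a ≤ q ∧ b ≤ p := by
  constructor <;> by_contra! hlt <;> nlinarith

lemma eq_of_mul_add_mul_eq (hpq : p.Coprime q) {i j i' j' : ℕ} (hi : i < q) (hi' : i' < q)
    (h : i * p + j * q = i' * p + j' * q) : i = i' ∧ j = j' := by
  have hmod : i * p ≡ i' * p [MOD q] := by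
    simpa [Nat.ModEq, Nat.add_mul_mod_self_right] using congrArg (· % q) h
  obtain rfl : i = i' := (Nat.ModEq.cancel_right_of_coprime hpq.symm hmod).eq_of_lt_of_lt hi hi'
  exact ⟨rfl, Nat.eq_of_mul_eq_mul_right (by omega) (Nat.add_left_cancel h)⟩

end Arithmetic

section Exponents

variable {p q : ℕ}

def boxExponents (p q m n : ℕ) : Finset ℕ :=
  (range m ×ˢ range n).image fun ij => ij.1 * p + ij.2 * q

lemma injOn_mul_add_mul (hpq : p.Coprime q) {m n : ℕ} (hm : m ≤ q) :
    Set.InjOn (fun ij : ℕ × ℕ => ij.1 * p + ij.2 * q) ↑(range m ×ˢ range n) := by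
  rintro ⟨i, j⟩ hij ⟨i', j'⟩ hij' h
  simp only [coe_product, Set.mem_prod, mem_coe, mem_range] at hij hij'
  obtain ⟨rfl, rfl⟩ := eq_of_mul_add_mul_eq hpq (by omega) (by omega) h
  rfl

lemma card_boxExponents (hpq : p.Coprime q) {m n : ℕ} (hm : m ≤ q) :
    #(boxExponents p q m n) = m * n := by
  rw [boxExponents, card_image_of_injOn (injOn_mul_add_mul hpq hm), card_product, card_range,
    card_range]

lemma sum_X_pow_boxExponents {R : Type*} [CommSemiring R] (hpq : p.Coprime q) {m n : ℕ}
    (hm : m ≤ q) :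
    ∑ k ∈ boxExponents p q m n, (X : R[X]) ^ k =
      (∑ i ∈ range m, X ^ (i * p)) * ∑ j ∈ range n, X ^ (j * q) := by
  rw [boxExponents, sum_image (injOn_mul_add_mul hpq hm), sum_mul_sum, sum_product]
  simp_rw [pow_add]

lemma disjoint_boxExponents (hpq : p.Coprime q) {a b : ℕ} (h : p * a + q * b = p * q + 1) :
    Disjoint (boxExponents p q a b)
      ((boxExponents p q (q - a) (p - b)).map (addRightEmbedding 1)) := by
  rw [disjoint_left]
  rintro _ hA hB
  simp only [boxExponents, mem_map, mem_image, mem_product, mem_range,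
    addRightEmbedding_apply] at hA hB
  obtain ⟨⟨i, j⟩, ⟨hi, hj⟩, rfl⟩ := hA
  obtain ⟨_, ⟨⟨i', j'⟩, ⟨hi', hj'⟩, rfl⟩, heq⟩ := hB
  dsimp only at hi hi' heq
  have hshift : i * p + (j + p) * q = (i' + a) * p + (j' + b) * q := by
    linear_combination heq.symm + h.symm
  have := (eq_of_mul_add_mul_eq hpq (by omega) (by omega) hshift).1
  omega

end Exponents

section Polynomials

variable {R : Type*} [CommRing R] {p q : ℕ}

lemma geom_sum_X_pow_mul (m n : ℕ) :
    (∑ i ∈ range n, (X : R[X]) ^ (i * m)) * (X ^ m - 1) = X ^ (m * n) - 1 := by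
  simp_rw [mul_comm _ m, pow_mul]
  exact geom_sum_mul _ n

lemma X_pow_sub_one_mul_X_pow_sub_one_mul_cyclotomic (hp : p.Prime) (hq : q.Prime)
    (hpq : p ≠ q) :
    (X ^ p - 1) * (X ^ q - 1) * cyclotomic (p * q) R = (X - 1) * (X ^ (p * q) - 1) := by
  have : Fact q.Prime := ⟨hq⟩
  have hexpand := cyclotomic_expand_eq_cyclotomic_mul hp
    (fun hdvd => hpq ((Nat.prime_dvd_prime_iff_eq hp hq).mp hdvd)) R
  rw [mul_comm q p] at hexpand
  have hΦq := cyclotomic_prime_mul_X_sub_one R q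
  have hΦq_expand := congrArg (expand R p) hΦq
  simp only [map_mul, map_sub, map_pow, expand_X, map_one, ← pow_mul, hexpand] at hΦq_expand
  rw [← hΦq, ← hΦq_expand]
  ring

lemma X_pow_sub_one_mul_X_pow_sub_one_mul_sum_sub {a b : ℕ} (h : p * a + q * b = p * q + 1)
    (ha : a ≤ q) (hb : b ≤ p) :
    (X ^ p - 1) * (X ^ q - 1) *
      ((∑ i ∈ range a, (X : R[X]) ^ (i * p)) * (∑ j ∈ range b, X ^ (j * q)) -
        X * ((∑ i ∈ range (q - a), X ^ (i * p)) * ∑ j ∈ range (p - b), X ^ (j * q))) =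
      (X - 1) * (X ^ (p * q) - 1) := by
  have hqb : q * b = p * (q - a) + 1 := by zify [ha] at h ⊢; linear_combination h
  have hpa : p * a = q * (p - b) + 1 := by zify [hb] at h ⊢; linear_combination h
  have hpq : p * q = p * (q - a) + q * (p - b) + 1 := by
    zify [ha, hb] at h ⊢; linear_combination h
  calc _ = (X ^ (p * a) - 1) * (X ^ (q * b) - 1) -
        X * ((X ^ (p * (q - a)) - 1) * (X ^ (q * (p - b)) - 1) : R[X]) := by
        rw [← geom_sum_X_pow_mul p a, ← geom_sum_X_pow_mul q b, ← geom_sum_X_pow_mul p (q - a),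
          ← geom_sum_X_pow_mul q (p - b)]
        ring
    _ = _ := by rw [hpa, hqb, hpq]; ring

lemma cyclotomic_prime_mul_prime_eq_sum_sub_sum (hp : p.Prime) (hq : q.Prime) {a b : ℕ}
    (h : p * a + q * b = p * q + 1) :
    cyclotomic (p * q) R = ∑ k ∈ boxExponents p q a b, X ^ k -
      ∑ k ∈ (boxExponents p q (q - a) (p - b)).map (addRightEmbedding 1), X ^ k := by
  have hpq := coprime_of_mul_add_mul_eq h
  obtain ⟨ha, hb⟩ := le_and_le_of_mul_add_mul_eq hp.one_lt hq.one_lt h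
  have hmonic : ((X ^ p - 1) * (X ^ q - 1) : R[X]).Monic := by
    simpa using (monic_X_pow_sub_C (1 : R) hp.ne_zero).mul (monic_X_pow_sub_C (1 : R) hq.ne_zero)
  apply hmonic.isRegular.left
  simp only [sum_map, addRightEmbedding_apply, pow_succ, ← sum_mul]
  rw [X_pow_sub_one_mul_X_pow_sub_one_mul_cyclotomic hp hq ((Nat.coprime_primes hp hq).mp hpq),
    sum_X_pow_boxExponents hpq ha, sum_X_pow_boxExponents hpq (Nat.sub_le q a),
    ← X_pow_sub_one_mul_X_pow_sub_one_mul_sum_sub h ha hb, mul_comm _ X]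

end Polynomials

lemma support_sum_X_pow_sub_sum_X_pow {R : Type*} [Ring R] [Nontrivial R] {s t : Finset ℕ}
    (hst : Disjoint s t) : (∑ k ∈ s, (X : R[X]) ^ k - ∑ k ∈ t, X ^ k).support = s ∪ t := by
  ext k
  rw [mem_support_iff, coeff_sub, finsetSum_coeff, finsetSum_coeff, mem_union]
  simp only [coeff_X_pow, sum_ite_eq]
  by_cases hs : k ∈ s
  · simp [hs, disjoint_left.mp hst hs]
  · by_cases ht : k ∈ t <;> simp [hs, ht]

theorem cyclotomic_binary_support_card_general (p q pbar qbar : ℕ) (hp : p.Prime) (hq : q.Prime)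
    (h : p * pbar + q * qbar = p * q + 1) :
    (cyclotomic (p * q) ℤ).support.card = 2 * pbar * qbar - 1 := by
  have hpq := coprime_of_mul_add_mul_eq h
  obtain ⟨ha, hb⟩ := le_and_le_of_mul_add_mul_eq hp.one_lt hq.one_lt h
  have hdisj := disjoint_boxExponents hpq h
  rw [cyclotomic_prime_mul_prime_eq_sum_sub_sum hp hq h, support_sum_X_pow_sub_sum_X_pow hdisj,
    card_union_of_disjoint hdisj, card_map, card_boxExponents hpq ha,
    card_boxExponents hpq (Nat.sub_le q pbar)]
  have hcount : (q - pbar) * (p - qbar) + 1 = pbar * qbar := by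
    zify [ha, hb] at h ⊢; linear_combination -h
  rw [mul_assoc]
  omega

theorem cyclotomic_binary_support_card (p q pbar qbar : ℕ) (hp : p.Prime) (hq : q.Prime)
    (hpq : p < q) (hpbar : 1 ≤ pbar) (hpbar' : pbar ≤ q - 1)
    (hqbar : 1 ≤ qbar) (hqbar' : qbar ≤ p - 1)
    (h : p * pbar + q * qbar = p * q + 1) :
    (cyclotomic (p * q) ℤ).support.card = 2 * pbar * qbar - 1 :=
  cyclotomic_binary_support_card_general p q pbar qbar hp hq h
end

section
/- Let p < q be distinct primes and let p̄ ∈ [1, q-1] be the inverse of p modulo q. Then the middle coefficient of Φ_{pq}(X), i.e., the coefficient of X^{φ(pq)/2}, equals (-1)^{p̄ - 1}. -/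
/-!
For distinct primes, `Φ_{pq}(X) (X^{pq} - 1) = (X - 1) Φ_p(X^q) Φ_q(X^p)`, and for `n < pq` the
coefficient of `X^n` in `Φ_p(X^q) Φ_q(X^p)` is `1` or `0` according as `n` does or does not lie
in the numerical semigroup `⟨p, q⟩`, because the representations `n = qi + pj` with `i < p`,
`j < q` are unique. Hence the coefficient of `X^(m+1)` in `Φ_{pq}` is
`[m + 1 ∈ ⟨p, q⟩] - [m ∈ ⟨p, q⟩]`. At the middle index `m + 1 = φ(pq)/2` we have
`m + (m + 1) = pq - p - q`, the Frobenius number of `⟨p, q⟩`, so at most one of `m`, `m + 1`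
lies in the semigroup. Writing `p p̄ = kq + 1`, an explicit representation puts `m + 1` in it
when `p̄` is odd, and `m` when `p̄` is even.
-/

open Polynomial Finset

namespace Nat

variable {p q pbar k n : ℕ}

theorem Coprime.injOn_mul_add_mul (h : Coprime p q) :
    Set.InjOn (fun x : ℕ × ℕ => q * x.1 + p * x.2) ↑(range p ×ˢ range q) := by
  rintro ⟨i, j⟩ hij ⟨i', j'⟩ hij' heq
  simp only [coe_product, coe_range, Set.mem_prod, Set.mem_Iio] at hij hij' heq
  have hmod : q * i ≡ q * i' [MOD p] := by
    simpa [Nat.ModEq, Nat.add_mul_mod_self_left] using congrArg (· % p) heq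
  obtain rfl : i = i' := (hmod.cancel_left_of_coprime h).eq_of_lt_of_lt hij.1 hij'.1
  rw [Nat.eq_of_mul_eq_mul_left (by omega : 0 < p) (by omega : p * j = p * j')]

theorem mem_image_mul_add_mul_iff (hn : n < p * q) :
    n ∈ (range p ×ˢ range q).image (fun x => q * x.1 + p * x.2) ↔
      n ∈ AddSubmonoid.closure ({p, q} : Set ℕ) := by
  simp only [AddSubmonoid.mem_closure_pair, mem_image, mem_product, mem_range, smul_eq_mul,
    Prod.exists]
  constructor
  · rintro ⟨i, j, -, rfl⟩
    exact ⟨j, i, by ring⟩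
  · rintro ⟨a, b, rfl⟩
    exact ⟨b, a, ⟨by nlinarith, by nlinarith⟩, by ring⟩

theorem Coprime.notMem_closure_pair_of_add_eq (h : Coprime p q) (hp : 1 < p) (hq : 1 < q)
    {a b : ℕ} (hab : a + b = p * q - p - q) (ha : a ∈ AddSubmonoid.closure ({p, q} : Set ℕ)) :
    b ∉ AddSubmonoid.closure ({p, q} : Set ℕ) := fun hb =>
  (frobeniusNumber_pair h hp hq).1 (hab ▸ add_mem ha hb)

theorem mem_closure_pair_of_odd (hq : Odd q) (hk : p * pbar = k * q + 1) (hpbar : pbar < q)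
    (hodd : Odd pbar) (hn : 2 * n + p + q = p * q + 1) :
    n ∈ AddSubmonoid.closure ({p, q} : Set ℕ) := by
  obtain ⟨b, rfl⟩ := hodd
  obtain ⟨c, rfl⟩ := hq
  have hkp : k < p := by nlinarith
  obtain ⟨a, rfl⟩ : ∃ a, p = 2 * a + k + 1 := ⟨(p - k - 1) / 2, by ring_nf at hk; omega⟩
  -- `n = b p + a q` where `p = 2a + k + 1` and `p̄ = 2b + 1`
  refine (AddSubmonoid.mem_closure_pair _ _ _).2 ⟨b, a, ?_⟩
  simp only [smul_eq_mul]
  nlinarith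

theorem mem_closure_pair_of_even (hq : Odd q) (hk : p * pbar = k * q + 1) (hpbar : pbar < q)
    (heven : Even pbar) (hn : 2 * n + p + q + 1 = p * q) :
    n ∈ AddSubmonoid.closure ({p, q} : Set ℕ) := by
  obtain ⟨b, rfl⟩ := heven
  obtain ⟨c, rfl⟩ := hq
  obtain ⟨a, rfl⟩ : ∃ a, k = 2 * a + 1 := ⟨k / 2, by ring_nf at hk; omega⟩
  obtain ⟨d, hd⟩ : ∃ d, 2 * c + 1 = 2 * d + b + b + 1 := ⟨c - b, by omega⟩
  rw [hd] at hk hn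
  -- `n = d p + a q` where `k = 2a + 1` and `q = 2d + p̄ + 1`
  refine (AddSubmonoid.mem_closure_pair _ _ _).2 ⟨d, a, ?_⟩
  simp only [smul_eq_mul]
  nlinarith

theorem totient_mul_add_add_of_prime (hp : p.Prime) (hq : q.Prime) (hpq : p ≠ q) :
    (p * q).totient + p + q = p * q + 1 := by
  rw [totient_mul ((coprime_primes hp hq).2 hpq), totient_prime hp, totient_prime hq]
  zify [hp.one_le, hq.one_le]
  ring

end Nat

namespace Polynomial

variable (R : Type*) [CommRing R] {p q : ℕ}

theorem cyclotomic_mul_prime_mul_X_pow_sub_one (hp : p.Prime) (hq : q.Prime) (hpq : p ≠ q) :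
    cyclotomic (p * q) R * (X ^ (p * q) - 1) =
      (X - 1) * (expand R q (cyclotomic p R) * expand R p (cyclotomic q R)) := by
  have := Fact.mk hp
  have := Fact.mk hq
  have hexpand : expand R p (cyclotomic q R) = cyclotomic (p * q) R * cyclotomic q R := by
    rw [cyclotomic_expand_eq_cyclotomic_mul hp ((Nat.prime_dvd_prime_iff_eq hp hq).not.2 hpq),
      mul_comm q]
  have hpow : (X ^ (p * q) - 1 : R[X]) = expand R q (cyclotomic p R) * (X ^ q - 1) := by
    have hXq : (X ^ q - 1 : R[X]) = expand R q (X - 1) := by simp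
    rw [hXq, ← map_mul, cyclotomic_prime_mul_X_sub_one]
    simp [pow_mul']
  rw [hpow, hexpand, ← cyclotomic_prime_mul_X_sub_one R q]
  ring

theorem expand_cyclotomic_mul_expand_cyclotomic_eq_sum (hp : p.Prime) (hq : q.Prime) :
    expand R q (cyclotomic p R) * expand R p (cyclotomic q R) =
      ∑ x ∈ range p ×ˢ range q, X ^ (q * x.1 + p * x.2) := by
  have := Fact.mk hp
  have := Fact.mk hq
  simp only [cyclotomic_prime, map_sum, map_pow, expand_X, sum_mul_sum, ← sum_product', pow_add,
    pow_mul]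

open scoped Classical in
theorem coeff_expand_cyclotomic_mul_expand_cyclotomic (hp : p.Prime) (hq : q.Prime) (hpq : p ≠ q)
    {n : ℕ} (hn : n < p * q) :
    (expand R q (cyclotomic p R) * expand R p (cyclotomic q R)).coeff n =
      if n ∈ AddSubmonoid.closure ({p, q} : Set ℕ) then 1 else 0 := by
  rw [expand_cyclotomic_mul_expand_cyclotomic_eq_sum R hp hq,
    ← sum_image ((Nat.coprime_primes hp hq).2 hpq).injOn_mul_add_mul, finsetSum_coeff]
  simp only [coeff_X_pow]
  rw [sum_ite_eq]
  exact if_congr (Nat.mem_image_mul_add_mul_iff hn) rfl rfl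

open scoped Classical in
theorem coeff_cyclotomic_mul_succ (hp : p.Prime) (hq : q.Prime) (hpq : p ≠ q)
    {m : ℕ} (hm : m + 1 < p * q) :
    (cyclotomic (p * q) R).coeff (m + 1) =
      (if m + 1 ∈ AddSubmonoid.closure ({p, q} : Set ℕ) then 1 else 0) -
        if m ∈ AddSubmonoid.closure ({p, q} : Set ℕ) then 1 else 0 := by
  have h := congrArg (coeff · (m + 1)) (cyclotomic_mul_prime_mul_X_pow_sub_one R hp hq hpq)
  simp only [mul_sub, sub_mul, mul_one, one_mul, coeff_sub, coeff_mul_X_pow', if_neg (not_le.2 hm),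
    coeff_X_mul] at h
  rw [← coeff_expand_cyclotomic_mul_expand_cyclotomic R hp hq hpq hm,
    ← coeff_expand_cyclotomic_mul_expand_cyclotomic R hp hq hpq (by omega)]
  linear_combination -h

end Polynomial

theorem cyclotomic_binary_middle_coeff (p q pbar : ℕ) (hp : p.Prime) (hq : q.Prime)
    (hpq : p < q) (hpbar : 1 ≤ pbar) (hpbar' : pbar ≤ q - 1)
    (hinv : p * pbar ≡ 1 [MOD q]) :
    (cyclotomic (p * q) ℤ).coeff ((p * q).totient / 2) = (-1) ^ (pbar - 1) := by
  have hpbar_lt : pbar < q := by have := hq.two_le; omega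
  obtain ⟨k, hk⟩ : ∃ k, p * pbar = k * q + 1 := by
    have hpos : 1 ≤ p * pbar := Nat.mul_pos hp.pos hpbar
    obtain ⟨k, hk⟩ := (Nat.modEq_iff_dvd' hpos).1 hinv.symm
    exact ⟨k, by rw [mul_comm k]; omega⟩
  have hqodd : Odd q := hq.odd_of_ne_two (by linarith [hp.two_le])
  have htot := Nat.totient_mul_add_add_of_prime hp hq hpq.ne
  obtain ⟨t, ht⟩ := Nat.totient_even (n := p * q) (by nlinarith [hp.two_le])
  have htot_pos := Nat.totient_pos.2 (Nat.mul_pos hp.pos hq.pos)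
  obtain ⟨m, hm⟩ : ∃ m, (p * q).totient / 2 = m + 1 := ⟨t - 1, by omega⟩
  have h2m : 2 * m + p + q + 1 = p * q := by omega
  have hnot : m ∈ AddSubmonoid.closure ({p, q} : Set ℕ) →
      m + 1 ∉ AddSubmonoid.closure ({p, q} : Set ℕ) :=
    ((Nat.coprime_primes hp hq).2 hpq.ne).notMem_closure_pair_of_add_eq hp.one_lt hq.one_lt
      (by omega)
  rw [hm, coeff_cyclotomic_mul_succ ℤ hp hq hpq.ne (by omega)]
  rcases Nat.even_or_odd pbar with hpbar_even | hpbar_odd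
  · have hmem := Nat.mem_closure_pair_of_even hqodd hk hpbar_lt hpbar_even h2m
    rw [if_neg (hnot hmem), if_pos hmem, (Nat.Even.sub_odd hpbar hpbar_even odd_one).neg_one_pow]
    norm_num
  · have hmem := Nat.mem_closure_pair_of_odd (n := m + 1) hqodd hk hpbar_lt hpbar_odd (by omega)
    rw [if_pos hmem, if_neg (fun h => hnot h hmem), (Nat.Odd.sub_odd hpbar_odd odd_one).neg_one_pow]
    norm_num
end

section
/- For distinct primes p < q, writing n = pq with p̄, q̄ the inverses of p mod q and q mod p in [1,q-1] and [1,p-1], the number θ_n = 2·p̄·q̄ − 1 of nonzero coefficients of Φ_{pq} satisfies θ_n > √(pq). -/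
/-! The count `2 * pbar * qbar - 1` is already at least `q`, and `q > √(p * q)` because `p < q`. -/

open Polynomial

/-- Eliminating `p * a` with the hypothesis gives
`p * (2 * a * b - 1 - q) = 2 * q * (b - 1) * (p - 1 - b) + (p - 2) * (q - 1) + 2 * (b - 1)`,
whose right-hand side is nonnegative. -/
lemma le_two_mul_mul_sub_one_of_mul_add_mul_eq {p q a b : ℕ} (hb : 1 ≤ b) (hbp : b ≤ p - 1)
    (h : p * a + q * b = p * q + 1) : q ≤ 2 * a * b - 1 := by
  rcases Nat.eq_zero_or_pos q with rfl | hq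
  · exact Nat.zero_le _
  have hp : 2 ≤ p := by omega
  have hbp' : (b : ℤ) ≤ p - 1 := by omega
  have h' : (p : ℤ) * a + q * b = p * q + 1 := by exact_mod_cast h
  have key : (p : ℤ) * (2 * a * b - 1 - q)
      = 2 * q * (b - 1) * (p - 1 - b) + (p - 2) * (q - 1) + 2 * (b - 1) := by
    linear_combination (2 * (b : ℤ)) * h'
  have hrhs : (0 : ℤ) ≤ 2 * q * (b - 1) * (p - 1 - b) + (p - 2) * (q - 1) + 2 * (b - 1) := by
    have : (0 : ℤ) ≤ q * (b - 1) * (p - 1 - b) := by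
      apply mul_nonneg (mul_nonneg _ _) <;> omega
    nlinarith
  have : ((q + 1 : ℕ) : ℤ) ≤ ((2 * a * b : ℕ) : ℤ) := by push_cast; nlinarith
  omega

theorem cyclotomic_binary_nonzero_coeffs_gt_sqrt_general (p q pbar qbar : ℕ) (hpq : p < q)
    (hqbar : 1 ≤ qbar) (hqbar' : qbar ≤ p - 1)
    (h : p * pbar + q * qbar = p * q + 1) :
    ((2 * pbar * qbar - 1 : ℕ) : ℝ) > Real.sqrt (p * q) := by
  have hq_le : q ≤ 2 * pbar * qbar - 1 := le_two_mul_mul_sub_one_of_mul_add_mul_eq hqbar hqbar' h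
  have hpq' : (p : ℝ) < q := by exact_mod_cast hpq
  calc Real.sqrt (p * q) < Real.sqrt (q * q) := by
        gcongr; linarith [(Nat.cast_nonneg p : (0 : ℝ) ≤ p)]
    _ = q := Real.sqrt_mul_self (Nat.cast_nonneg q)
    _ ≤ ((2 * pbar * qbar - 1 : ℕ) : ℝ) := by exact_mod_cast hq_le

theorem cyclotomic_binary_nonzero_coeffs_gt_sqrt (p q pbar qbar : ℕ) (hp : p.Prime)
    (hq : q.Prime) (hpq : p < q) (hpbar : 1 ≤ pbar) (hpbar' : pbar ≤ q - 1)
    (hqbar : 1 ≤ qbar) (hqbar' : qbar ≤ p - 1)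
    (h : p * pbar + q * qbar = p * q + 1)
    (htheta : (cyclotomic (p * q) ℤ).support.card = 2 * pbar * qbar - 1) :
    ((2 * pbar * qbar - 1 : ℕ) : ℝ) > Real.sqrt (p * q) :=
  cyclotomic_binary_nonzero_coeffs_gt_sqrt_general p q pbar qbar hpq hqbar hqbar' h
end

section
/- For all primes p < q, the maximum gap of the binary cyclotomic polynomial Φ_{pq}(X) equals p − 1; that is, the maximum difference between consecutive exponents appearing with nonzero coefficient in Φ_{pq}(X) is p − 1. -/
/-!
Let `S = ⟨p, q⟩` be the numerical semigroup generated by `p` and `q`. Every element of `S` is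
`i q + j p` with `i < p`, and this `i` is determined by the residue mod `p`, so `S` is the disjoint
union of the progressions `i q + p ℕ`: `(1 - X^p) ∑_{n ∈ S} X^n = ∑_{i < p} X^{iq}`. Comparing with
`Φ_{pq} (X^p - 1) = (X - 1) ∑_{i < p} X^{iq}` gives `Φ_{pq} = (1 - X) ∑_{n ∈ S} X^n` in `ℤ⟦X⟧`, so
the exponents of `Φ_{pq}` are the `n + 1` with exactly one of `n + 1`, `n` in `S`.

Since `1, …, p - 1 ∉ S` while `0, p ∈ S`, the exponents `1` and `p` are consecutive. Conversely,
any `p` consecutive integers below `(p - 1) q` contain a multiple of `p`, which is in `S`, and an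
integer `≡ (p - 1) q (mod p)`, which is not; so after every exponent below the degree
`(p - 1)(q - 1)` another one follows within `p - 1`.
-/

open Polynomial

/-- The maximum gap of a polynomial: the largest difference between consecutive
exponents appearing with nonzero coefficient. -/
noncomputable def maxGap (P : Polynomial ℤ) : ℕ :=
  ((P.support ×ˢ P.support).filter
      (fun ij => ij.1 < ij.2 ∧ ∀ k ∈ P.support, ¬(ij.1 < k ∧ k < ij.2))).sup
    (fun ij => ij.2 - ij.1)

open Finset

theorem maxGap_le {P : ℤ[X]} {g : ℕ}
    (h : ∀ a ∈ P.support, a < P.natDegree → ∃ m ∈ P.support, a < m ∧ m ≤ a + g) :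
    maxGap P ≤ g := by
  refine Finset.sup_le fun ⟨a, b⟩ hab => ?_
  simp only [mem_filter, mem_product] at hab
  obtain ⟨⟨ha, hb⟩, hlt, hgap⟩ := hab
  obtain ⟨m, hm, ham, hma⟩ := h a ha (hlt.trans_le (le_natDegree_of_mem_supp b hb))
  have := hgap m hm
  dsimp only
  omega

theorem le_maxGap {P : ℤ[X]} {a b : ℕ} (ha : a ∈ P.support) (hb : b ∈ P.support) (hab : a < b)
    (hgap : ∀ k ∈ P.support, ¬(a < k ∧ k < b)) : b - a ≤ maxGap P :=
  Finset.le_sup (f := fun ij : ℕ × ℕ => ij.2 - ij.1) (b := (a, b)) <|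
    mem_filter.mpr ⟨mem_product.mpr ⟨ha, hb⟩, hab, hgap⟩

theorem exists_succ_not_iff_of_not_iff {P : ℕ → Prop} {a b : ℕ} (hab : a ≤ b)
    (h : ¬(P a ↔ P b)) : ∃ n, a ≤ n ∧ n < b ∧ ¬(P (n + 1) ↔ P n) := by
  induction b, hab using Nat.le_induction with
  | base => exact absurd Iff.rfl h
  | succ b hab ih =>
    by_cases hb : P (b + 1) ↔ P b
    · obtain ⟨n, han, hnb, hn⟩ := ih (by rwa [hb] at h)
      exact ⟨n, han, by omega, hn⟩
    · exact ⟨b, hab, by omega, hb⟩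

theorem exists_mem_Ico_mod_eq {p r : ℕ} (y : ℕ) (hr : r < p) :
    ∃ m, y ≤ m ∧ m < y + p ∧ m % p = r := by
  have : r ∈ (Ico y (y + p)).image (· % p) := by
    rw [Nat.image_Ico_mod]
    exact mem_range.mpr hr
  simpa [and_assoc] using this

section NumericalSemigroup

variable {p q : ℕ}

theorem mul_le_of_mem_closure_pair_of_modEq (hpq : p.Coprime q) {n i : ℕ}
    (hn : n ∈ AddSubmonoid.closure {p, q}) (hi : i < p) (hni : n ≡ i * q [MOD p]) :
    i * q ≤ n := by
  obtain ⟨a, b, rfl⟩ := (AddSubmonoid.mem_closure_pair _ _ _).mp hn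
  simp only [smul_eq_mul] at hni ⊢
  have hbi : b ≡ i [MOD p] :=
    Nat.ModEq.cancel_right_of_coprime hpq <| .trans (by simp [Nat.ModEq]) hni
  have hib : i ≤ b :=
    calc i = b % p := (Nat.mod_eq_of_lt hi).symm.trans hbi.symm
      _ ≤ b := Nat.mod_le b p
  nlinarith

theorem notMem_closure_pair_of_pos_of_lt (hpq : p < q) {n : ℕ} (hn : 0 < n) (hnp : n < p) :
    n ∉ AddSubmonoid.closure {p, q} := by
  rw [AddSubmonoid.mem_closure_pair]
  rintro ⟨a, b, rfl⟩
  simp only [smul_eq_mul] at hn hnp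
  rcases Nat.eq_zero_or_pos a with rfl | ha <;> rcases Nat.eq_zero_or_pos b with rfl | hb <;>
    nlinarith

theorem sub_mem_closure_pair (hq : 0 < q) {n : ℕ} (hn : n ∈ AddSubmonoid.closure {p, q})
    (hnq : ∀ i < p, n ≠ q * i) : p ≤ n ∧ n - p ∈ AddSubmonoid.closure {p, q} := by
  obtain ⟨a, b, rfl⟩ := (AddSubmonoid.mem_closure_pair _ _ _).mp hn
  rw [AddSubmonoid.mem_closure_pair]
  simp only [smul_eq_mul] at hnq ⊢
  rcases Nat.eq_zero_or_pos a with rfl | ha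
  · have hpb : p ≤ b := by
      by_contra! hbp
      exact hnq b hbp (by ring)
    -- `b q - p = (q - 1) p + (b - p) q`
    refine ⟨by nlinarith, q - 1, b - p, ?_⟩
    obtain ⟨c, rfl⟩ := Nat.exists_eq_add_of_le hpb
    obtain ⟨r, rfl⟩ := Nat.exists_eq_add_of_le' hq
    simp only [Nat.add_sub_cancel_left, Nat.add_sub_cancel]
    ring_nf
    omega
  · refine ⟨by nlinarith, a - 1, b, ?_⟩
    obtain ⟨c, rfl⟩ := Nat.exists_eq_add_of_le' ha
    simp only [Nat.add_sub_cancel]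
    ring_nf
    omega

theorem mul_sub_notMem_closure_pair (hpq : p.Coprime q) {i : ℕ} (hi : i < p) (h : p ≤ q * i) :
    q * i - p ∉ AddSubmonoid.closure {p, q} := fun hmem => by
  obtain ⟨c, hc⟩ := Nat.exists_eq_add_of_le h
  have := mul_le_of_mem_closure_pair_of_modEq hpq hmem hi <| by
    simp [Nat.ModEq, mul_comm i, hc]
  rw [mul_comm] at this
  omega

theorem one_sub_X_pow_mul_mk_indicator_closure_pair {R : Type*} [CommRing R]
    (hpq : p.Coprime q) (hq : 0 < q) :
    (1 - PowerSeries.X ^ p) *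
        PowerSeries.mk ((AddSubmonoid.closure {p, q} : Set ℕ).indicator (1 : ℕ → R)) =
      ∑ i ∈ range p, (PowerSeries.X : PowerSeries R) ^ (q * i) := by
  ext n
  simp only [sub_mul, one_mul, map_sub, PowerSeries.coeff_X_pow_mul', PowerSeries.coeff_mk,
    map_sum, PowerSeries.coeff_X_pow]
  by_cases hT : ∃ i < p, n = q * i
  · obtain ⟨i, hi, rfl⟩ := hT
    have hmem : q * i ∈ AddSubmonoid.closure {p, q} := by
      rw [mul_comm, ← smul_eq_mul]
      exact nsmul_mem (AddSubmonoid.subset_closure (by simp)) i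
    have hsub := mul_sub_notMem_closure_pair hpq hi
    simp +contextual [Nat.mul_left_cancel_iff hq, hi, hmem, hsub]
  simp only [not_exists, not_and] at hT
  rw [Finset.sum_eq_zero fun i hi => if_neg (hT i (mem_range.mp hi))]
  by_cases hn : n ∈ AddSubmonoid.closure {p, q}
  · obtain ⟨hpn, hsub⟩ := sub_mem_closure_pair hq hn hT
    simp [hn, hpn, hsub]
  · have hsub : p ≤ n → n - p ∉ AddSubmonoid.closure {p, q} := fun hpn hsub => hn <| by
      simpa [Nat.sub_add_cancel hpn] using
        add_mem hsub (AddSubmonoid.subset_closure (by simp : p ∈ ({p, q} : Set ℕ)))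
    simp +contextual [hn, hsub]

theorem exists_succ_mem_closure_pair_not_iff (hpq : p.Coprime q) (hp : 0 < p) {y : ℕ}
    (hy : y + p ≤ (p - 1) * q) :
    ∃ n, y ≤ n ∧ n < y + (p - 1) ∧
      ¬(n + 1 ∈ AddSubmonoid.closure {p, q} ↔ n ∈ AddSubmonoid.closure {p, q}) := by
  obtain ⟨a, hya, hay, ha⟩ := exists_mem_Ico_mod_eq y hp
  obtain ⟨b, hyb, hby, hb⟩ := exists_mem_Ico_mod_eq y (Nat.mod_lt ((p - 1) * q) hp)
  have ha_mem : a ∈ AddSubmonoid.closure {p, q} := by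
    rw [← Nat.div_add_mod a p, ha, add_zero, mul_comm, ← smul_eq_mul]
    exact nsmul_mem (AddSubmonoid.subset_closure (by simp)) _
  have hb_mem : b ∉ AddSubmonoid.closure {p, q} := fun h => by
    have := mul_le_of_mem_closure_pair_of_modEq hpq h (by omega) hb
    omega
  rcases le_total a b with hab | hba
  · obtain ⟨n, h1, h2, h3⟩ := exists_succ_not_iff_of_not_iff
      (P := (· ∈ AddSubmonoid.closure {p, q})) hab (by tauto)
    exact ⟨n, by omega, by omega, h3⟩
  · obtain ⟨n, h1, h2, h3⟩ := exists_succ_not_iff_of_not_iff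
      (P := (· ∈ AddSubmonoid.closure {p, q})) hba (by tauto)
    exact ⟨n, by omega, by omega, h3⟩

end NumericalSemigroup

section Cyclotomic

variable {p q : ℕ}

theorem cyclotomic_prime_mul_prime_mul_X_pow_sub_one (R : Type*) [CommRing R] (hp : p.Prime)
    (hq : q.Prime) (hpq : p ≠ q) :
    cyclotomic (p * q) R * (X ^ p - 1) = (X - 1) * ∑ i ∈ range p, X ^ (q * i) := by
  have := Fact.mk hp
  have hexp := cyclotomic_expand_eq_cyclotomic_mul hq
    (fun h => hpq ((Nat.prime_dvd_prime_iff_eq hq hp).mp h).symm) R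
  rw [← cyclotomic_prime_mul_X_sub_one R p, ← mul_assoc, ← hexp, cyclotomic_prime, map_sum]
  simp [pow_mul, mul_comm]

theorem coe_cyclotomic_prime_mul_prime (R : Type*) [CommRing R] (hp : p.Prime) (hq : q.Prime)
    (hpq : p ≠ q) :
    (cyclotomic (p * q) R : PowerSeries R) =
      (1 - PowerSeries.X) *
        PowerSeries.mk ((AddSubmonoid.closure {p, q} : Set ℕ).indicator 1) := by
  have hunit : IsUnit (1 - PowerSeries.X ^ p : PowerSeries R) :=
    PowerSeries.isUnit_iff_constantCoeff.mpr (by simp [hp.ne_zero])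
  refine hunit.mul_left_cancel ?_
  rw [mul_left_comm, one_sub_X_pow_mul_mk_indicator_closure_pair
    ((Nat.coprime_primes hp hq).mpr hpq) hq.pos]
  have h := congrArg coeToPowerSeries.ringHom
    (cyclotomic_prime_mul_prime_mul_X_pow_sub_one R hp hq hpq)
  simp only [map_mul, map_sub, map_sum, map_pow, map_one, coeToPowerSeries.ringHom_apply,
    coe_X] at h
  linear_combination -h

theorem coeff_succ_cyclotomic_prime_mul_prime (R : Type*) [CommRing R] (hp : p.Prime)
    (hq : q.Prime) (hpq : p ≠ q) (n : ℕ) :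
    (cyclotomic (p * q) R).coeff (n + 1) =
      (AddSubmonoid.closure {p, q} : Set ℕ).indicator 1 (n + 1) -
        (AddSubmonoid.closure {p, q} : Set ℕ).indicator 1 n := by
  rw [← Polynomial.coeff_coe, coe_cyclotomic_prime_mul_prime R hp hq hpq]
  simp [sub_mul, PowerSeries.coeff_succ_X_mul]

theorem succ_mem_support_cyclotomic_prime_mul_prime_iff (hp : p.Prime) (hq : q.Prime)
    (hpq : p ≠ q) (n : ℕ) :
    n + 1 ∈ (cyclotomic (p * q) ℤ).support ↔
      ¬(n + 1 ∈ AddSubmonoid.closure {p, q} ↔ n ∈ AddSubmonoid.closure {p, q}) := by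
  rw [mem_support_iff, coeff_succ_cyclotomic_prime_mul_prime ℤ hp hq hpq]
  by_cases h₁ : n + 1 ∈ AddSubmonoid.closure {p, q} <;>
    by_cases h₀ : n ∈ AddSubmonoid.closure {p, q} <;> simp [h₁, h₀]

end Cyclotomic

theorem cyclotomic_binary_maxGap (p q : ℕ) (hp : p.Prime) (hq : q.Prime) (hpq : p < q) :
    maxGap (cyclotomic (p * q) ℤ) = p - 1 := by
  have hp2 := hp.two_le
  have hcop : p.Coprime q := (Nat.coprime_primes hp hq).mpr hpq.ne
  have hsupp := succ_mem_support_cyclotomic_prime_mul_prime_iff hp hq hpq.ne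
  have hsmall : ∀ n, 0 < n → n < p → n ∉ AddSubmonoid.closure {p, q} :=
    fun _ => notMem_closure_pair_of_pos_of_lt hpq
  apply le_antisymm
  · refine maxGap_le fun a _ ha => ?_
    rw [natDegree_cyclotomic, Nat.totient_mul hcop, Nat.totient_prime hp,
      Nat.totient_prime hq, Nat.mul_sub_one] at ha
    obtain ⟨n, han, hna, hn⟩ := exists_succ_mem_closure_pair_not_iff hcop hp.pos (y := a)
      (by omega)
    exact ⟨n + 1, (hsupp n).mpr hn, by omega, by omega⟩
  · have hp_mem : p ∈ AddSubmonoid.closure {p, q} := AddSubmonoid.subset_closure (by simp)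
    have h1 : 1 ∈ (cyclotomic (p * q) ℤ).support :=
      (hsupp 0).mpr fun h => hsmall 1 one_pos hp2 (h.mpr (zero_mem _))
    have hpsupp : p ∈ (cyclotomic (p * q) ℤ).support := by
      obtain ⟨n, rfl⟩ : ∃ n, p = n + 1 := ⟨p - 1, by omega⟩
      exact (hsupp n).mpr fun h => hsmall n (by omega) (by omega) (h.mp hp_mem)
    refine le_maxGap h1 hpsupp hp2 fun k hk ⟨h1k, hkp⟩ => ?_
    obtain ⟨n, rfl⟩ : ∃ n, k = n + 1 := ⟨k - 1, by omega⟩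
    exact (hsupp n).mp hk <|
      iff_of_false (hsmall _ (by omega) hkp) (hsmall _ (by omega) (by omega))
end

section
/- sup over n of the height A(n) of the n-th cyclotomic polynomial is infinite; i.e., for every M there exists a positive integer n and an index j such that the coefficient of X^j in Φ_n(X) has absolute value greater than M. -/
/-!
Let `T` be a set of an odd number `t` of primes in `(y, 2y]` and `n = ∏ T`, so that `μ(n) = -1`
and `μ(n/p) = 1` for `p ∈ T`. In the Möbius product `Φ_n = ∏_{e ∣ n} (1 - X^e)^{μ(n/e)}` every
divisor `e` other than `1` and the primes of `T` exceeds `2y`, so modulo `X^(2y+1)` we get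
`(1 - X) Φ_n ≡ ∏_{p ∈ T} (1 - X^p) ≡ 1 - ∑_{p ∈ T} X^p`, and the coefficient of `X^(2y)` in `Φ_n`
is `1 - t`.

Such `T` exist for every `t`: Chebyshev's bound `2^N ≤ (N + 1) lcm(1, …, N) ≤ (N + 1) N^π(N)`
gives `m π(2^m) ≥ 2^m - m - 1`, which is impossible if each of the `m` dyadic intervals
`(2^j, 2^(j+1)]` contained fewer than `t` primes.
-/

open Polynomial Finset ArithmeticFunction
open scoped ArithmeticFunction.Moebius Nat.Prime

namespace Nat

theorem lcmUpto_le_pow_primeCounting (n : ℕ) : lcmUpto n ≤ n ^ π n := by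
  rcases eq_or_ne n 0 with rfl | hn
  · simp [lcmUpto]
  rw [lcmUpto_eq_prod_pow_log, ← primesLE_card_eq_primeCounting]
  exact prod_le_pow_card _ _ _ fun p _ => pow_log_le_self p hn

theorem two_pow_le_mul_primeCounting_two_pow (m : ℕ) : 2 ^ m ≤ m * π (2 ^ m) + m + 1 := by
  have key : 2 ^ 2 ^ m ≤ 2 ^ (m * π (2 ^ m) + m + 1) := calc
    2 ^ 2 ^ m ≤ (2 ^ m + 1) * lcmUpto (2 ^ m) := Chebyshev.two_pow_le_mul_lcmUpto _
    _ ≤ 2 ^ (m + 1) * (2 ^ m) ^ π (2 ^ m) := by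
      gcongr
      · rw [pow_succ]; have := Nat.one_le_two_pow (n := m); omega
      · exact lcmUpto_le_pow_primeCounting _
    _ = 2 ^ (m * π (2 ^ m) + m + 1) := by ring
  exact (Nat.pow_le_pow_iff_right (by norm_num)).1 key

theorem sum_Ioc_one_two_pow {M : Type*} [AddCommMonoid M] (f : ℕ → M) (m : ℕ) :
    ∑ i ∈ Ioc 1 (2 ^ m), f i = ∑ j ∈ range m, ∑ i ∈ Ioc (2 ^ j) (2 ^ (j + 1)), f i := by
  induction m with
  | zero => simp
  | succ m ih =>
    rw [sum_range_succ, ← ih,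
      sum_Ioc_consecutive _ Nat.one_le_two_pow (pow_le_pow_right₀ one_le_two m.le_succ)]

theorem exists_mul_mul_add_lt_two_pow (t : ℕ) : ∃ m, m * (m * t) + m + 1 < 2 ^ m := by
  refine ⟨4 * (t + 4), ?_⟩
  have h : t + 4 + 1 ≤ 2 ^ (t + 4) := Nat.lt_two_pow_self
  calc 4 * (t + 4) * (4 * (t + 4) * t) + 4 * (t + 4) + 1 < (t + 4 + 1) ^ 4 := by
        ring_nf; nlinarith
    _ ≤ (2 ^ (t + 4)) ^ 4 := by gcongr
    _ = 2 ^ (4 * (t + 4)) := by ring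

theorem exists_le_card_filter_prime_Ioc_two_mul (t : ℕ) :
    ∃ y, t ≤ #{p ∈ Ioc y (2 * y) | p.Prime} := by
  by_contra! h
  have hπ (m : ℕ) : π (2 ^ m) ≤ m * t := by
    rw [← primesLE_card_eq_primeCounting, primesLE_eq_filter_Ioc_one, card_filter,
      sum_Ioc_one_two_pow]
    simp_rw [← card_filter, pow_succ']
    exact (sum_le_sum fun j _ => (h (2 ^ j)).le).trans (by simp)
  obtain ⟨m, hm⟩ := exists_mul_mul_add_lt_two_pow t
  have := two_pow_le_mul_primeCounting_two_pow m
  have := Nat.mul_le_mul_left m (hπ m)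
  omega

theorem two_mul_lt_of_not_prime {e y : ℕ} (he0 : e ≠ 0) (he1 : e ≠ 1) (he : ¬e.Prime)
    (hy : ∀ p, p.Prime → p ∣ e → y < p) : 2 * y < e := by
  obtain ⟨m, hm⟩ := e.minFac_dvd
  have hm0 : m ≠ 0 := by rintro rfl; exact he0 hm
  have hm1 : m ≠ 1 := by
    rintro rfl
    exact he (hm ▸ (mul_one e.minFac).symm ▸ minFac_prime he1)
  have hym : y < m :=
    (hy _ (minFac_prime hm1) (m.minFac_dvd.trans (Dvd.intro_left _ hm.symm))).trans_le
      (minFac_le (pos_of_ne_zero hm0))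
  have h2 : 2 ≤ e.minFac := (minFac_prime he1).two_le
  nlinarith

theorem two_mul_lt_of_mem_divisors_prod {T : Finset ℕ} {y e : ℕ}
    (hprime : ∀ p ∈ T, p.Prime) (hlt : ∀ p ∈ T, y < p) (he : e ∈ (∏ p ∈ T, p).divisors)
    (he1 : e ≠ 1) (heT : e ∉ T) :
    2 * y < e := by
  have hmem (p) (hp : p.Prime) (hpe : p ∣ e) : p ∈ T := primeFactors_prod hprime ▸
    mem_primeFactors.2 ⟨hp, hpe.trans (dvd_of_mem_divisors he), (mem_divisors.1 he).2⟩
  exact two_mul_lt_of_not_prime (ne_of_gt (pos_of_mem_divisors he)) he1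
    (fun h => heT (hmem e h dvd_rfl)) fun p hp hpe => hlt p (hmem p hp hpe)

theorem sum_divisorsAntidiagonal_moebius_toNat_eq {n : ℕ} (hn : 1 < n) :
    ∑ i ∈ n.divisorsAntidiagonal, (μ i.1).toNat =
      ∑ i ∈ n.divisorsAntidiagonal, (-μ i.1).toNat := by
  have hsum : ∑ i ∈ n.divisorsAntidiagonal, μ i.1 = 0 := by
    rw [Nat.sum_divisorsAntidiagonal (fun d _ => μ d), ← coe_mul_zeta_apply,
      moebius_mul_coe_zeta, one_apply_ne hn.ne']
  zify
  rw [← sub_eq_zero, ← sum_sub_distrib, ← hsum]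
  exact sum_congr rfl fun i _ => by omega

end Nat

theorem ArithmeticFunction.moebius_prod_primes {T : Finset ℕ} (hT : ∀ p ∈ T, p.Prime) :
    μ (∏ p ∈ T, p) = (-1) ^ #T := by
  rw [isMultiplicative_moebius.map_prod_of_prime T hT,
    prod_congr rfl fun p hp => moebius_apply_prime (hT p hp), prod_const]

theorem zpow_mul_pow_toNat_neg {G : Type*} [GroupWithZero G] {a : G} (ha : a ≠ 0) (z : ℤ) :
    a ^ z * a ^ (-z).toNat = a ^ z.toNat := by
  rw [← zpow_natCast, ← zpow_natCast, ← zpow_add₀ ha]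
  congr 1
  omega

namespace Polynomial

variable {R : Type*} [CommRing R]

theorem X_pow_dvd_prod_one_sub_X_pow_sub_sum {N : ℕ} {T : Finset ℕ}
    (hT : ∀ p ∈ T, N ≤ 2 * p) :
    (X : R[X]) ^ N ∣ ∏ p ∈ T, (1 - X ^ p) - (1 - ∑ p ∈ T, X ^ p) := by
  induction T using Finset.induction_on with
  | empty => simp
  | insert a T ha ih =>
    have hdvd : (X : R[X]) ^ N ∣ X ^ a * ∑ p ∈ T, X ^ p := by
      rw [mul_sum]
      refine dvd_sum fun p hp => ?_
      rw [← pow_add]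
      have := hT a (mem_insert_self a T)
      have := hT p (mem_insert_of_mem hp)
      exact pow_dvd_pow X (by omega)
    rw [prod_insert ha, sum_insert ha]
    convert dvd_add ((ih fun p hp => hT p (mem_insert_of_mem hp)).mul_left (1 - X ^ a)) hdvd
      using 1
    ring

theorem sum_range_coeff_mul_one_sub_X (A : R[X]) (N : ℕ) :
    ∑ j ∈ range (N + 1), (A * (1 - X)).coeff j = A.coeff N := by
  induction N with
  | zero => simp [mul_one_sub]
  | succ N ih =>
    rw [sum_range_succ, ih, mul_one_sub, coeff_sub, coeff_mul_X]
    ring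

theorem coeff_eq_sum_coeff_of_X_pow_dvd {A B : R[X]} {N : ℕ}
    (h : X ^ (N + 1) ∣ A * (1 - X) - B) :
    A.coeff N = ∑ j ∈ range (N + 1), B.coeff j := by
  rw [← sum_range_coeff_mul_one_sub_X]
  refine sum_congr rfl fun j hj => ?_
  rw [← sub_eq_zero, ← coeff_sub]
  exact X_pow_dvd_iff.1 h j (mem_range.1 hj)

theorem sum_range_coeff_one_sub_sum_X_pow {N : ℕ} {T : Finset ℕ} (hT : ∀ p ∈ T, p < N)
    (hN : 0 < N) :
    ∑ j ∈ range N, (1 - ∑ p ∈ T, X ^ p : R[X]).coeff j = 1 - #T := by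
  simp only [coeff_sub, coeff_one, finsetSum_coeff, coeff_X_pow, sum_sub_distrib]
  rw [sum_comm]
  simp only [sum_ite_eq', mem_range, hN, ↓reduceIte, sum_boole, filter_true_of_mem hT]

theorem mk_prod_divisors_prod_primes {T : Finset ℕ} {y : ℕ} (hprime : ∀ p ∈ T, p.Prime)
    (hlt : ∀ p ∈ T, y < p) (g : ℕ → ℕ) :
    Ideal.Quotient.mk (Ideal.span {(X : R[X]) ^ (2 * y + 1)})
        (∏ e ∈ (∏ p ∈ T, p).divisors, (1 - X ^ e) ^ g e) =
      Ideal.Quotient.mk (Ideal.span {(X : R[X]) ^ (2 * y + 1)})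
        ((1 - X) ^ g 1 * ∏ p ∈ T, (1 - X ^ p) ^ g p) := by
  have hn0 : ∏ p ∈ T, p ≠ 0 := prod_ne_zero_iff.2 fun p hp => (hprime p hp).ne_zero
  have hsub : insert 1 T ⊆ (∏ p ∈ T, p).divisors := insert_subset (Nat.one_mem_divisors.2 hn0)
    fun p hp => Nat.mem_divisors.2 ⟨dvd_prod_of_mem _ hp, hn0⟩
  rw [map_prod, ← prod_subset hsub, prod_insert fun h1 => Nat.not_prime_one (hprime 1 h1),
    pow_one, map_mul, map_prod]
  intro e he heT
  have hXe : X ^ e ∈ Ideal.span {(X : R[X]) ^ (2 * y + 1)} :=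
    Ideal.mem_span_singleton.2 (pow_dvd_pow X (Nat.two_mul_lt_of_mem_divisors_prod hprime hlt he
      (fun h => heT (h ▸ mem_insert_self 1 T)) fun h => heT (mem_insert_of_mem h)))
  rw [map_pow, map_sub, map_one, Ideal.Quotient.eq_zero_iff_mem.2 hXe, sub_zero, one_pow]

section IsDomain

variable [IsDomain R]

theorem cyclotomic_mul_prod_X_pow_sub_one_pow_toNat (n : ℕ) :
    cyclotomic n R * ∏ i ∈ n.divisorsAntidiagonal, (X ^ i.2 - 1) ^ (-μ i.1).toNat =
      ∏ i ∈ n.divisorsAntidiagonal, (X ^ i.2 - 1) ^ (μ i.1).toNat := by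
  apply IsFractionRing.injective R[X] (RatFunc R)
  have hne (i) (hi : i ∈ n.divisorsAntidiagonal) :
      algebraMap R[X] (RatFunc R) (X ^ i.2 - 1) ≠ 0 := by
    rw [Ne, IsFractionRing.to_map_eq_zero_iff, ← C_1]
    exact (monic_X_pow_sub_C 1 (Nat.ne_of_gt (Nat.pos_of_mem_divisors
      (Nat.snd_mem_divisors_of_mem_antidiagonal hi)))).ne_zero
  simp only [map_mul, map_prod, map_pow, cyclotomic_eq_prod_X_pow_sub_one_pow_moebius,
    ← prod_mul_distrib]
  exact prod_congr rfl fun i hi => zpow_mul_pow_toNat_neg (hne i hi) _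

theorem cyclotomic_mul_prod_one_sub_X_pow_pow_toNat {n : ℕ} (hn : 1 < n) :
    cyclotomic n R * ∏ i ∈ n.divisorsAntidiagonal, (1 - X ^ i.2) ^ (-μ i.1).toNat =
      ∏ i ∈ n.divisorsAntidiagonal, (1 - X ^ i.2) ^ (μ i.1).toNat := by
  have h := cyclotomic_mul_prod_X_pow_sub_one_pow_toNat (R := R) n
  have hsign (e k : ℕ) : ((X : R[X]) ^ e - 1) ^ k = (-1) ^ k * (1 - X ^ e) ^ k := by
    rw [← mul_pow, neg_one_mul, neg_sub]
  simp_rw [hsign, prod_mul_distrib, prod_pow_eq_pow_sum,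
    Nat.sum_divisorsAntidiagonal_moebius_toNat_eq hn, mul_left_comm (cyclotomic n R)] at h
  exact mul_left_cancel₀ (pow_ne_zero _ (neg_ne_zero.2 one_ne_zero)) h

theorem X_pow_dvd_cyclotomic_prod_mul_one_sub_X_sub {T : Finset ℕ} {y : ℕ}
    (hprime : ∀ p ∈ T, p.Prime) (hlt : ∀ p ∈ T, y < p) (hodd : Odd #T) :
    (X : R[X]) ^ (2 * y + 1) ∣
      cyclotomic (∏ p ∈ T, p) R * (1 - X) - ∏ p ∈ T, (1 - X ^ p) := by
  set n := ∏ p ∈ T, p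
  obtain ⟨p₀, hp₀⟩ := card_pos.1 hodd.pos
  have hn1 : 1 < n := (hprime p₀ hp₀).one_lt.trans_le <|
    Nat.le_of_dvd (prod_pos fun p hp => (hprime p hp).pos) (dvd_prod_of_mem _ hp₀)
  have hμn : μ n = -1 := by rw [moebius_prod_primes hprime, hodd.neg_one_pow]
  have hμp (p) (hp : p ∈ T) : μ (n / p) = 1 := by
    rw [Nat.div_eq_of_eq_mul_left (hprime p hp).pos (prod_erase_mul T (fun q => q) hp).symm,
      moebius_prod_primes fun q hq => hprime q (mem_of_mem_erase hq), card_erase_of_mem hp,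
      (Nat.Odd.sub_odd hodd odd_one).neg_one_pow]
  have hleft : ∏ p ∈ T, (1 - X ^ p : R[X]) ^ (-μ (n / p)).toNat = 1 :=
    prod_eq_one fun p hp => by simp [hμp p hp]
  have hright : ∏ p ∈ T, (1 - X ^ p : R[X]) ^ (μ (n / p)).toNat = ∏ p ∈ T, (1 - X ^ p) :=
    prod_congr rfl fun p hp => by simp [hμp p hp]
  have hid := congrArg (Ideal.Quotient.mk (Ideal.span {(X : R[X]) ^ (2 * y + 1)}))
    (cyclotomic_mul_prod_one_sub_X_pow_pow_toNat (R := R) hn1)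
  rw [Nat.prod_divisorsAntidiagonal' fun d e => (1 - X ^ e) ^ (-μ d).toNat,
    Nat.prod_divisorsAntidiagonal' fun d e => (1 - X ^ e) ^ (μ d).toNat, map_mul,
    mk_prod_divisors_prod_primes hprime hlt, mk_prod_divisors_prod_primes hprime hlt,
    hleft, hright, Nat.div_one, hμn] at hid
  rw [← Ideal.mem_span_singleton, ← Ideal.Quotient.eq, map_mul]
  simpa using hid

theorem coeff_cyclotomic_prod_primes_Ioc {T : Finset ℕ} {y : ℕ}
    (hT : T ⊆ {p ∈ Ioc y (2 * y) | p.Prime}) (hodd : Odd #T) :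
    (cyclotomic (∏ p ∈ T, p) R).coeff (2 * y) = 1 - #T := by
  have hmem (p) (hp : p ∈ T) : y < p ∧ p ≤ 2 * y := mem_Ioc.1 (mem_filter.1 (hT hp)).1
  have hcyc := X_pow_dvd_cyclotomic_prod_mul_one_sub_X_sub (R := R)
    (fun p hp => (mem_filter.1 (hT hp)).2) (fun p hp => (hmem p hp).1) hodd
  have hprod : (X : R[X]) ^ (2 * y + 1) ∣ ∏ p ∈ T, (1 - X ^ p) - (1 - ∑ p ∈ T, X ^ p) :=
    X_pow_dvd_prod_one_sub_X_pow_sub_sum fun p hp => by have := hmem p hp; omega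
  have h := dvd_add hcyc hprod
  rw [sub_add_sub_cancel] at h
  rw [coeff_eq_sum_coeff_of_X_pow_dvd h,
    sum_range_coeff_one_sub_sum_X_pow (fun p hp => by have := hmem p hp; omega) (by omega)]

end IsDomain

end Polynomial

theorem cyclotomic_height_unbounded (M : ℤ) :
    ∃ n j : ℕ, 0 < n ∧ M < |(cyclotomic n ℤ).coeff j| := by
  obtain ⟨y, hy⟩ := Nat.exists_le_card_filter_prime_Ioc_two_mul (2 * M.toNat + 3)
  obtain ⟨T, hTsub, hTcard⟩ := exists_subset_card_eq hy
  have hodd : Odd #T := hTcard ▸ ⟨M.toNat + 1, by ring⟩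
  refine ⟨∏ p ∈ T, p, 2 * y, prod_pos fun p hp => (mem_filter.1 (hTsub hp)).2.pos, ?_⟩
  rw [coeff_cyclotomic_prod_primes_Ioc hTsub hodd, hTcard, abs_sub_comm, abs_of_nonneg (by omega)]
  omega
end

section
/- Every integer m appears as a coefficient of some cyclotomic polynomial: for every m ∈ ℤ there exist a positive integer n and an index j such that the coefficient of X^j in Φ_n(X) equals m. -/
/-!
Suzuki's argument. Take a set `s` of an odd number `t` of primes, any two of which add up to more
than `M := max s`; such sets exist for every `t` because some interval `(N, 2N]` contains `t`
primes. Modulo `X ^ (M + 1)` every product `X ^ p * X ^ q` or `X ^ (p * q)` with `p, q ∈ s`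
vanishes, and adding the primes one at a time through `Φ_{np}(X) Φ_n(X) = Φ_n(X ^ p)` gives
`(1 - X) Φ_{∏ s} ≡ 1 - ∑_{q ∈ s} X ^ q`. So `Φ_{∏ s}` has the coefficient `1 - t` at `X ^ M`
and `2 - t` at `X ^ (M - 2)`, while `Φ_{2 ∏ s}`, for which
`(1 + X) Φ_{2 ∏ s} ≡ 1 + ∑_{q ∈ s} X ^ q`, has `t - 1` and `t - 2` there.
-/

open Polynomial Finset

namespace Nat

theorem two_pow_le_succ_mul_pow_primeCounting (n : ℕ) :
    2 ^ n ≤ (n + 1) * n ^ primeCounting n := by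
  rcases eq_or_ne n 0 with rfl | hn
  · simp
  calc 2 ^ n ≤ (n + 1) * lcmUpto n := Chebyshev.two_pow_le_mul_lcmUpto n
    _ ≤ (n + 1) * n ^ primeCounting n := by
      rw [lcmUpto_eq_prod_pow_log, ← primesLE_card_eq_primeCounting]
      gcongr
      exact prod_le_pow_card _ _ _ fun p _ ↦ pow_log_le_self p hn

theorem primeCounting_le_add_card_filter_prime_Ioc {a b : ℕ} (hab : a ≤ b) :
    primeCounting b ≤ primeCounting a + #{p ∈ Ioc a b | p.Prime} := by
  simp only [← primesLE_card_eq_primeCounting, primesLE_eq_filter_Ioc_zero]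
  rw [← Ioc_union_Ioc_eq_Ioc (zero_le a) hab, filter_union]
  exact card_union_le _ _

theorem exists_mul_sq_lt_two_pow (c : ℕ) : ∃ L, c * (L + 1) ^ 2 < 2 ^ (L + 1) := by
  have h := (isLittleO_pow_const_const_pow_of_one_lt (R := ℝ) 2 one_lt_two).def
    (c := 1 / (c + 1)) (by positivity)
  obtain ⟨n, hn, hn1⟩ := (h.and (Filter.eventually_ge_atTop 1)).exists
  obtain ⟨L, rfl⟩ : ∃ L, n = L + 1 := ⟨n - 1, by omega⟩
  refine ⟨L, ?_⟩
  simp only [norm_pow, Real.norm_natCast, Real.norm_two] at hn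
  rw [div_mul_eq_mul_div, one_mul, le_div_iff₀ (by positivity)] at hn
  have : (0 : ℝ) < ((L + 1 : ℕ) : ℝ) ^ 2 := by positivity
  exact_mod_cast (by nlinarith : (c : ℝ) * ((L + 1 : ℕ) : ℝ) ^ 2 < 2 ^ (L + 1))

/-- Otherwise `π (2 ^ (K + 1)) ≤ 1 + K t`, against `2 ^ n ≤ (n + 1) n ^ π n`. -/
theorem exists_le_card_filter_prime_Ioc (t : ℕ) :
    ∃ N, 2 ≤ N ∧ t ≤ #{p ∈ Ioc N (2 * N) | p.Prime} := by
  by_contra! h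
  have hπ : ∀ K, primeCounting (2 ^ (K + 1)) ≤ 1 + K * t := by
    intro K
    induction K with
    | zero => simpa using (by decide : primeCounting 2 ≤ 1)
    | succ K ih =>
      have hstep := primeCounting_le_add_card_filter_prime_Ioc
        (a := 2 ^ (K + 1)) (b := 2 * 2 ^ (K + 1)) (by omega)
      have hfew := h (2 ^ (K + 1)) (by have := Nat.one_le_two_pow (n := K); rw [pow_succ]; omega)
      rw [show 2 ^ (K + 1 + 1) = 2 * 2 ^ (K + 1) by ring]
      nlinarith
  obtain ⟨L, hL⟩ := exists_mul_sq_lt_two_pow (t + 3)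
  set n := 2 ^ (L + 1)
  have hexp : 2 ^ n ≤ 2 ^ (L + 2 + (L + 1) * (1 + L * t)) :=
    calc 2 ^ n ≤ (n + 1) * n ^ primeCounting n := two_pow_le_succ_mul_pow_primeCounting n
      _ ≤ 2 ^ (L + 2) * n ^ (1 + L * t) := by
        gcongr
        · rw [pow_succ]; omega
        · exact Nat.one_le_two_pow
        · exact hπ L
      _ = 2 ^ (L + 2 + (L + 1) * (1 + L * t)) := by rw [← pow_mul, ← pow_add]
  have := (Nat.pow_le_pow_iff_right (by norm_num)).mp hexp
  nlinarith

theorem exists_primes_card_eq_lt_add (t : ℕ) :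
    ∃ s : Finset ℕ, #s = t ∧ (∀ q ∈ s, q.Prime ∧ q ≠ 2) ∧
      ∀ p ∈ s, ∀ q ∈ s, ∀ r ∈ s, r < p + q := by
  obtain ⟨N, hN, hcard⟩ := exists_le_card_filter_prime_Ioc t
  obtain ⟨s, hsub, rfl⟩ := exists_subset_card_eq hcard
  have hmem : ∀ q ∈ s, q.Prime ∧ N < q ∧ q ≤ 2 * N := fun q hq ↦ by
    have := hsub hq
    simp only [mem_filter, mem_Ioc] at this
    exact ⟨this.2, this.1⟩
  refine ⟨s, rfl, fun q hq ↦ ⟨(hmem q hq).1, by grind⟩, fun p hp q hq r hr ↦ ?_⟩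
  grind

theorem not_dvd_prod_of_notMem {s : Finset ℕ} (hprime : ∀ q ∈ s, q.Prime) {p : ℕ}
    (hp : p.Prime) (hps : p ∉ s) : ¬p ∣ ∏ q ∈ s, q := by
  rw [Prime.dvd_finsetProd_iff hp.prime]
  rintro ⟨q, hq, hpq⟩
  exact hps ((prime_dvd_prime_iff_eq hp (hprime q hq)).mp hpq ▸ hq)

theorem filter_le_sub_two_eq_erase {s : Finset ℕ} (hs : ∀ q ∈ s, Odd q) {M : ℕ} (hM : M ∈ s)
    (hmax : ∀ q ∈ s, q ≤ M) : {q ∈ s | q ≤ M - 2} = s.erase M := by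
  obtain ⟨a, ha⟩ := hs M hM
  ext q
  simp only [mem_filter, mem_erase]
  constructor
  · rintro ⟨hq, hqM⟩
    exact ⟨by omega, hq⟩
  · rintro ⟨hqM, hq⟩
    obtain ⟨b, hb⟩ := hs q hq
    have := hmax q hq
    exact ⟨hq, by omega⟩

end Nat

namespace Polynomial

variable {R : Type*} [CommRing R]

variable (R) in
noncomputable abbrev modXPow (M : ℕ) : R[X] →+* R[X] ⧸ Ideal.span {(X : R[X]) ^ (M + 1)} :=
  Ideal.Quotient.mk _

section modXPow

variable {M : ℕ}

theorem modXPow_eq_iff {P Q : R[X]} :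
    modXPow R M P = modXPow R M Q ↔ X ^ (M + 1) ∣ P - Q := by
  rw [Ideal.Quotient.eq, Ideal.mem_span_singleton]

theorem modXPow_X_pow {k : ℕ} (hk : M < k) : modXPow R M (X ^ k) = 0 := by
  rw [← map_zero (modXPow R M), modXPow_eq_iff, sub_zero]
  exact pow_dvd_pow X hk

theorem coeff_eq_of_modXPow_eq {P Q : R[X]} (h : modXPow R M P = modXPow R M Q) {k : ℕ}
    (hk : k ≤ M) : P.coeff k = Q.coeff k := by
  rw [modXPow_eq_iff, X_pow_dvd_iff] at h
  simpa [sub_eq_zero] using h k (by omega)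

theorem modXPow_expand_eq {P Q : R[X]} (h : modXPow R M P = modXPow R M Q) {p : ℕ}
    (hp : 0 < p) : modXPow R M (expand R p P) = modXPow R M (expand R p Q) := by
  rw [modXPow_eq_iff] at h ⊢
  rw [← map_sub]
  refine dvd_trans ?_ (_root_.map_dvd (expand R p) h)
  rw [map_pow, expand_X]
  exact pow_dvd_pow_of_dvd (dvd_pow_self X hp.ne') _

theorem coeff_eq_sum_of_modXPow_eq {ε : R} {P f : R[X]}
    (h : modXPow R M ((1 - C ε * X) * P) = modXPow R M f) {k : ℕ} (hk : k ≤ M) :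
    P.coeff k = ∑ i ∈ range (k + 1), ε ^ (k - i) * f.coeff i := by
  induction k with
  | zero => simpa [coeff_zero_eq_eval_zero] using coeff_eq_of_modXPow_eq h hk
  | succ k ih =>
    have hk1 := coeff_eq_of_modXPow_eq h hk
    rw [sub_mul, one_mul, coeff_sub, mul_assoc, coeff_C_mul, coeff_X_mul] at hk1
    have hpow : ∀ i ∈ range (k + 1),
        ε ^ (k + 1 - i) * f.coeff i = ε * (ε ^ (k - i) * f.coeff i) := by
      intro i hi
      rw [Nat.sub_add_comm (Nat.lt_succ_iff.mp (mem_range.mp hi)), pow_succ]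
      ring
    rw [sum_range_succ, sum_congr rfl hpow, ← mul_sum, ← ih (by omega), Nat.sub_self, ← hk1]
    ring

end modXPow

theorem sum_range_pow_mul_coeff_X_pow (ε : R) (k q : ℕ) :
    ∑ i ∈ range (k + 1), ε ^ (k - i) * (X ^ q : R[X]).coeff i =
      if q ≤ k then ε ^ (k - q) else 0 := by
  simp only [coeff_X_pow, mul_ite, mul_one, mul_zero, sum_ite_eq', mem_range, Nat.lt_succ_iff]

theorem sum_range_pow_mul_coeff_one_sub_C_mul_sum_X_pow {ε : R} (hε : ε ^ 2 = 1)
    {s : Finset ℕ} (hs : ∀ q ∈ s, Odd q) {k : ℕ} (hk : Odd k) :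
    ∑ i ∈ range (k + 1), ε ^ (k - i) * (1 - C ε * ∑ q ∈ s, X ^ q : R[X]).coeff i =
      ε * (1 - #{q ∈ s | q ≤ k}) := by
  have hεk : ε ^ k = ε := by rw [pow_eq_pow_mod k hε, Nat.odd_iff.mp hk, pow_one]
  have hεkq : ∀ q ∈ s, q ≤ k → ε ^ (k - q) = 1 := fun q hq hqk ↦ by
    rw [pow_eq_pow_mod _ hε, Nat.even_iff.mp (Nat.Odd.sub_odd hk (hs q hq)), pow_zero]
  calc _ = ∑ i ∈ range (k + 1), ε ^ (k - i) * (X ^ 0 : R[X]).coeff i -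
        ε * ∑ q ∈ s, ∑ i ∈ range (k + 1), ε ^ (k - i) * (X ^ q : R[X]).coeff i := by
        simp only [pow_zero, coeff_sub, coeff_C_mul, finsetSum_coeff, mul_sub, sum_sub_distrib,
          mul_sum]
        rw [sum_comm]
        simp only [mul_left_comm]
    _ = ε * (1 - #{q ∈ s | q ≤ k}) := by
      have hcount : ∑ q ∈ s, (if q ≤ k then ε ^ (k - q) else 0) = #{q ∈ s | q ≤ k} := by
        rw [sum_ite, sum_const_zero, add_zero,
          sum_congr rfl fun q hq ↦ hεkq q (mem_filter.mp hq).1 (mem_filter.mp hq).2,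
          sum_const, nsmul_one]
      simp only [sum_range_pow_mul_coeff_X_pow, zero_le, if_true, Nat.sub_zero, hεk, hcount]
      ring

section primeProducts

variable {M : ℕ} {s : Finset ℕ}

theorem modXPow_expand_one_sub_sum_X_pow {p : ℕ} (hs : ∀ q ∈ s, M < p * q) :
    modXPow R M (expand R p (1 - ∑ q ∈ s, X ^ q)) = 1 := by
  have hexpand : expand R p (1 - ∑ q ∈ s, X ^ q) = 1 - ∑ q ∈ s, X ^ (p * q) := by
    simp [pow_mul]
  rw [hexpand, map_sub, map_one, map_sum,
    sum_eq_zero fun q hq ↦ modXPow_X_pow (hs q hq), sub_zero]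

theorem modXPow_one_sub_sum_X_pow_cons {p : ℕ} (hp : p ∉ s) (hs : ∀ q ∈ s, M < p + q) :
    modXPow R M (1 - ∑ q ∈ s.cons p hp, X ^ q) =
      modXPow R M (1 - ∑ q ∈ s, X ^ q) * modXPow R M (1 - X ^ p) := by
  have hcross : modXPow R M (X ^ p * ∑ q ∈ s, X ^ q) = 0 := by
    simp only [mul_sum, ← pow_add, map_sum]
    exact sum_eq_zero fun q hq ↦ modXPow_X_pow (hs q hq)
  rw [← map_mul, sum_cons, show 1 - (X ^ p + ∑ q ∈ s, X ^ q) =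
    (1 - ∑ q ∈ s, X ^ q) * (1 - X ^ p) - X ^ p * ∑ q ∈ s, (X ^ q : R[X]) by ring,
    map_sub, hcross, sub_zero]

theorem modXPow_one_sub_sum_X_pow_mul_one_add_sum_X_pow (hs : ∀ p ∈ s, ∀ q ∈ s, M < p + q) :
    modXPow R M ((1 - ∑ q ∈ s, X ^ q) * (1 + ∑ q ∈ s, X ^ q)) = 1 := by
  have hsq : modXPow R M ((∑ q ∈ s, X ^ q) * ∑ q ∈ s, X ^ q) = 0 := by
    simp only [sum_mul_sum, ← pow_add, map_sum]
    exact sum_eq_zero fun p hp ↦ sum_eq_zero fun q hq ↦ modXPow_X_pow (hs p hp q hq)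
  rw [show (1 - ∑ q ∈ s, X ^ q) * (1 + ∑ q ∈ s, X ^ q) =
    1 - (∑ q ∈ s, X ^ q) * ∑ q ∈ s, (X ^ q : R[X]) by ring, map_sub, hsq, map_one, sub_zero]

theorem modXPow_cyclotomic_prod (hne : s.Nonempty) (hprime : ∀ q ∈ s, q.Prime)
    (hsum : ∀ p ∈ s, ∀ q ∈ s, M < p + q) :
    (Odd #s → modXPow R M ((1 - X) * cyclotomic (∏ q ∈ s, q) R) =
      modXPow R M (1 - ∑ q ∈ s, X ^ q)) ∧
    (Even #s → modXPow R M ((1 - ∑ q ∈ s, X ^ q) * cyclotomic (∏ q ∈ s, q) R) =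
      modXPow R M (1 - X)) := by
  induction hne using Finset.Nonempty.cons_induction with
  | singleton a =>
    have := Fact.mk (hprime a (mem_singleton_self a))
    refine ⟨fun _ ↦ ?_, fun h ↦ absurd h (by simp)⟩
    rw [prod_singleton, sum_singleton,
      show (1 - X) * cyclotomic a R = -(cyclotomic a R * (X - 1)) by ring,
      cyclotomic_prime_mul_X_sub_one, neg_sub]
  | cons a s has hne ih =>
    have ha := hprime a (mem_cons_self a s)
    have hprime' : ∀ q ∈ s, q.Prime := fun q hq ↦ hprime q (mem_cons_of_mem hq)
    have hsa : ∀ q ∈ s, M < a + q := fun q hq ↦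
      hsum a (mem_cons_self a s) q (mem_cons_of_mem hq)
    obtain ⟨ihodd, iheven⟩ :=
      ih hprime' fun p hp q hq ↦ hsum p (mem_cons_of_mem hp) q (mem_cons_of_mem hq)
    have hexpand := cyclotomic_expand_eq_cyclotomic_mul ha
      (Nat.not_dvd_prod_of_notMem hprime' ha has) R
    have hexpandA := modXPow_expand_one_sub_sum_X_pow (R := R) (M := M) (p := a)
      fun q hq ↦ by nlinarith [ha.two_le, (hprime' q hq).two_le, hsa q hq]
    simp only [prod_cons, mul_comm a, card_cons, map_mul]
    rw [modXPow_one_sub_sum_X_pow_cons has hsa]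
    set n := ∏ q ∈ s, q
    set A : R[X] := 1 - ∑ q ∈ s, X ^ q
    constructor
    · intro hodd
      have hA := iheven (by simpa [parity_simps] using hodd)
      have h := modXPow_expand_eq hA ha.pos
      rw [map_mul, map_mul, hexpandA, hexpand, one_mul] at h
      simp only [map_mul, map_sub, map_one, map_pow, expand_X] at h hA ⊢
      linear_combination modXPow R M A * h - modXPow R M (cyclotomic (n * a) R) * hA
    · intro heven
      have hA := ihodd (by simpa [parity_simps] using heven)
      have h := modXPow_expand_eq hA ha.pos
      rw [map_mul, hexpandA, hexpand] at h
      simp only [map_mul, map_sub, map_one, map_pow, expand_X] at h hA ⊢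
      linear_combination (1 - modXPow R M X) * h -
        (1 - modXPow R M X ^ a) * modXPow R M (cyclotomic (n * a) R) * hA

theorem modXPow_cyclotomic_prod_mul_two (hprime : ∀ q ∈ s, q.Prime) (h2 : 2 ∉ s)
    (hsum : ∀ p ∈ s, ∀ q ∈ s, M < p + q) (hodd : Odd #s) :
    modXPow R M ((1 + X) * cyclotomic ((∏ q ∈ s, q) * 2) R) =
      modXPow R M (1 + ∑ q ∈ s, X ^ q) := by
  have hA := (modXPow_cyclotomic_prod (R := R) (card_pos.mp hodd.pos) hprime hsum).1 hodd
  have h := modXPow_expand_eq hA two_pos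
  rw [map_mul, modXPow_expand_one_sub_sum_X_pow fun q hq ↦ two_mul q ▸ hsum q hq q hq,
    cyclotomic_expand_eq_cyclotomic_mul Nat.prime_two
      (Nat.not_dvd_prod_of_notMem hprime Nat.prime_two h2)] at h
  have hAB := modXPow_one_sub_sum_X_pow_mul_one_add_sum_X_pow (R := R) hsum
  set n := ∏ q ∈ s, q
  set A : R[X] := 1 - ∑ q ∈ s, X ^ q
  set B : R[X] := 1 + ∑ q ∈ s, X ^ q
  simp only [map_mul, map_sub, map_add, map_one, map_pow, expand_X] at h hA hAB ⊢
  linear_combination -(1 + modXPow R M X) * modXPow R M (cyclotomic (n * 2) R) * hAB -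
    (1 + modXPow R M X) * modXPow R M (cyclotomic (n * 2) R) * modXPow R M B * hA +
    modXPow R M B * h

theorem coeff_cyclotomic_prod (hprime : ∀ q ∈ s, q.Prime) (h2 : 2 ∉ s)
    (hsum : ∀ p ∈ s, ∀ q ∈ s, M < p + q) (hodd : Odd #s) {k : ℕ} (hk : Odd k)
    (hkM : k ≤ M) :
    (cyclotomic (∏ q ∈ s, q) R).coeff k = 1 - #{q ∈ s | q ≤ k} ∧
      (cyclotomic ((∏ q ∈ s, q) * 2) R).coeff k = #{q ∈ s | q ≤ k} - 1 := by
  have hs : ∀ q ∈ s, Odd q := fun q hq ↦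
    (hprime q hq).odd_of_ne_two (ne_of_mem_of_not_mem hq h2)
  constructor
  · have h : modXPow R M ((1 - C 1 * X) * cyclotomic (∏ q ∈ s, q) R) =
        modXPow R M (1 - C 1 * ∑ q ∈ s, X ^ q) := by
      simpa only [C_1, one_mul] using
        (modXPow_cyclotomic_prod (R := R) (card_pos.mp hodd.pos) hprime hsum).1 hodd
    rw [coeff_eq_sum_of_modXPow_eq h hkM,
      sum_range_pow_mul_coeff_one_sub_C_mul_sum_X_pow (one_pow 2) hs hk, one_mul]
  · have h : modXPow R M ((1 - C (-1) * X) * cyclotomic ((∏ q ∈ s, q) * 2) R) =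
        modXPow R M (1 - C (-1) * ∑ q ∈ s, X ^ q) := by
      simpa only [C_neg, C_1, neg_mul, one_mul, sub_neg_eq_add] using
        modXPow_cyclotomic_prod_mul_two (R := R) hprime h2 hsum hodd
    rw [coeff_eq_sum_of_modXPow_eq h hkM,
      sum_range_pow_mul_coeff_one_sub_C_mul_sum_X_pow (by norm_num) hs hk]
    ring

end primeProducts

end Polynomial

theorem exists_cyclotomic_coeff_eq_of_neg {m : ℤ} (hm : m < 0) :
    ∃ n j : ℕ, 0 < n ∧ (cyclotomic n ℤ).coeff j = m ∧
      (cyclotomic (n * 2) ℤ).coeff j = -m := by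
  obtain ⟨r, hr⟩ : ∃ r : ℕ, m = -(2 * r + 2) ∨ m = -(2 * r + 1) :=
    ⟨(-m - 1).toNat / 2, by omega⟩
  obtain ⟨s, hcard, hprime, hsum⟩ := Nat.exists_primes_card_eq_lt_add (2 * r + 3)
  have hne : s.Nonempty := card_pos.mp (by omega)
  set M := s.max' hne
  have hM : M ∈ s := s.max'_mem hne
  have hodd : ∀ q ∈ s, Odd q := fun q hq ↦ (hprime q hq).1.odd_of_ne_two (hprime q hq).2
  have hcoeff := fun (k : ℕ) (hk : Odd k) (hkM : k ≤ M) ↦ coeff_cyclotomic_prod (R := ℤ)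
    (fun q hq ↦ (hprime q hq).1) (fun h ↦ (hprime 2 h).2 rfl)
    (fun p hp q hq ↦ hsum p hp q hq M hM) (hcard ▸ odd_two_mul_add_one (r + 1)) hk hkM
  have hn : 0 < ∏ q ∈ s, q := prod_pos fun q hq ↦ (hprime q hq).1.pos
  rcases hr with rfl | rfl
  · have hfilter : {q ∈ s | q ≤ M} = s := filter_true_of_mem fun q hq ↦ s.le_max' q hq
    obtain ⟨h1, h2⟩ := hcoeff M (hodd M hM) le_rfl
    refine ⟨∏ q ∈ s, q, M, hn, ?_, ?_⟩ <;>
      simp only [h1, h2, hfilter, hcard] <;> push_cast <;> ring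
  · obtain ⟨a, ha⟩ := hodd M hM
    have hM3 : 3 ≤ M := by have := (hprime M hM).1.two_le; have := (hprime M hM).2; omega
    obtain ⟨h1, h2⟩ := hcoeff (M - 2) ⟨a - 1, by omega⟩ (by omega)
    refine ⟨∏ q ∈ s, q, M - 2, hn, ?_, ?_⟩ <;>
      simp only [h1, h2, Nat.filter_le_sub_two_eq_erase hodd hM (s.le_max' · ·),
        card_erase_of_mem hM, hcard] <;> push_cast <;> ring

theorem every_integer_is_cyclotomic_coeff (m : ℤ) :
    ∃ n j : ℕ, 0 < n ∧ (cyclotomic n ℤ).coeff j = m := by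
  rcases lt_trichotomy m 0 with hm | rfl | hm
  · obtain ⟨n, j, hn, h, -⟩ := exists_cyclotomic_coeff_eq_of_neg hm
    exact ⟨n, j, hn, h⟩
  · exact ⟨1, 2, one_pos, by simp [coeff_X, coeff_one]⟩
  · obtain ⟨n, j, hn, -, h⟩ := exists_cyclotomic_coeff_eq_of_neg (neg_neg_of_pos hm)
    exact ⟨n * 2, j, by omega, by rw [h, neg_neg]⟩
end

section
/- For every integer n > 1, the coefficient of X^1 in Φ_n(X) equals −μ(n), where μ is the Möbius function. -/
/-!
Multiplying `Φ_d` by its constant term `±1` gives a polynomial with constant term `1`, and on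
such polynomials the coefficient of `X` is additive under multiplication. Applied to
`∏_{d ∣ n} Φ_d = X ^ n - 1`, this shows that `a(d) := Φ_d(0) · (coefficient of X in Φ_d)`
has divisor sums `-[n = 1]`, exactly like `-μ`; Möbius inversion gives `a = -μ`, and
`Φ_n(0) = 1` for `n > 1`.
-/

open Polynomial Finset ArithmeticFunction
open scoped ArithmeticFunction.Moebius

theorem Polynomial.coeff_one_prod_of_coeff_zero_eq_one {ι R : Type*} [CommSemiring R]
    {s : Finset ι} {f : ι → R[X]} (h : ∀ i ∈ s, (f i).coeff 0 = 1) :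
    (∏ i ∈ s, f i).coeff 1 = ∑ i ∈ s, (f i).coeff 1 := by
  classical
  induction s using Finset.induction_on with
  | empty => simp [coeff_one]
  | insert a s ha ih =>
    rw [forall_mem_insert] at h
    have hs : (∏ i ∈ s, f i).coeff 0 = 1 := by
      rw [coeff_zero_prod]; exact prod_eq_one h.2
    rw [prod_insert ha, sum_insert ha, coeff_mul, Nat.sum_antidiagonal_eq_sum_range_succ_mk,
      sum_range_succ, sum_range_one, ih h.2]
    simp [h.1, hs, add_comm]

theorem ArithmeticFunction.eq_of_sum_divisors_eq {R : Type*} [AddCommGroup R] {f g : ℕ → R}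
    (h : ∀ n > 0, ∑ d ∈ n.divisors, f d = ∑ d ∈ n.divisors, g d) {n : ℕ} (hn : 0 < n) :
    f n = g n := by
  have hf := sum_eq_iff_sum_smul_moebius_eq.mp h n hn
  have hg := (sum_eq_iff_sum_smul_moebius_eq (g := fun m => ∑ d ∈ m.divisors, g d)).mp
    (fun _ _ => rfl) n hn
  rw [← hf, hg]

theorem ArithmeticFunction.sum_divisors_moebius {R : Type*} [Ring R] (n : ℕ) :
    ∑ d ∈ n.divisors, (μ d : R) = if n = 1 then 1 else 0 := by
  rw [← one_apply, ← coe_moebius_mul_coe_zeta, coe_mul_zeta_apply]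
  simp only [intCoe_apply]

namespace Polynomial

variable (R : Type*) [CommRing R] {n : ℕ}

theorem cyclotomic_coeff_zero_sq (hn : 0 < n) : (cyclotomic n R).coeff 0 ^ 2 = 1 := by
  rcases (Nat.one_le_iff_ne_zero.mpr hn.ne').eq_or_lt with rfl | hn
  · simp
  · rw [cyclotomic_coeff_zero R hn, one_pow]

theorem prod_divisors_cyclotomic_coeff_zero (hn : 0 < n) :
    ∏ d ∈ n.divisors, (cyclotomic d R).coeff 0 = -1 := by
  rw [← coeff_zero_prod, prod_cyclotomic_eq_X_pow_sub_one hn]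
  simp [hn.ne'.symm]

theorem sum_divisors_cyclotomic_coeff_zero_mul_coeff_one (hn : 0 < n) :
    ∑ d ∈ n.divisors, (cyclotomic d R).coeff 0 * (cyclotomic d R).coeff 1 =
      if n = 1 then -1 else 0 := by
  have hprod : ∏ d ∈ n.divisors, C ((cyclotomic d R).coeff 0) * cyclotomic d R = 1 - X ^ n := by
    rw [prod_mul_distrib, ← map_prod, prod_divisors_cyclotomic_coeff_zero R hn,
      prod_cyclotomic_eq_X_pow_sub_one hn]
    simp
  have hconst : ∀ d ∈ n.divisors, (C ((cyclotomic d R).coeff 0) * cyclotomic d R).coeff 0 = 1 :=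
    fun d hd => by rw [coeff_C_mul, ← sq, cyclotomic_coeff_zero_sq R (Nat.pos_of_mem_divisors hd)]
  simp_rw [← coeff_C_mul, ← coeff_one_prod_of_coeff_zero_eq_one hconst, hprod, coeff_sub,
    coeff_X_pow, coeff_one]
  grind

theorem cyclotomic_coeff_zero_mul_coeff_one (hn : 0 < n) :
    (cyclotomic n R).coeff 0 * (cyclotomic n R).coeff 1 = -μ n := by
  refine eq_of_sum_divisors_eq (f := fun d => (cyclotomic d R).coeff 0 * (cyclotomic d R).coeff 1)
    (g := fun d => -(μ d : R)) (fun m hm => ?_) hn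
  rw [sum_divisors_cyclotomic_coeff_zero_mul_coeff_one R hm, sum_neg_distrib,
    sum_divisors_moebius]
  split_ifs <;> simp

end Polynomial

theorem cyclotomic_coeff_one (n : ℕ) (hn : 1 < n) :
    (cyclotomic n ℤ).coeff 1 = -(ArithmeticFunction.moebius n) := by
  simpa [cyclotomic_coeff_zero ℤ hn] using
    cyclotomic_coeff_zero_mul_coeff_one ℤ (zero_lt_one.trans hn)
end

section
/- For every integer n ≥ 3 that is not a power of 2, the middle coefficient of Φ_n(X), i.e., the coefficient of X^{φ(n)/2}, is an odd integer; and if n ≥ 3 is a power of 2, this middle coefficient is 0. -/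
/-!
A palindromic polynomial `∑ aⱼ Xʲ` of degree `2c` has `f(1) = a_c + 2 ∑_{j<c} aⱼ`, so its
middle coefficient has the parity of `f(1)`. `Φₙ` is palindromic for `n ≥ 2` (the inverse of a
primitive root is again one), and `Φₙ(1)` is `p` when `n` is a positive power of the prime `p` and
`1` when `n` is not a prime power; hence it is odd unless `n` is a power of `2`.
For `n = 2^(k+1)` one has `Φₙ = 1 + X^(2^k)`, whose middle coefficient vanishes once `k ≥ 1`.
-/

open Polynomial Finset

namespace Polynomial

theorem eval_one_eq_coeff_add_two_mul_sum_of_reflect_eq {R : Type*} [CommSemiring R] {p : R[X]}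
    {c : ℕ} (hdeg : p.natDegree ≤ 2 * c) (hp : p.reflect (2 * c) = p) :
    p.eval 1 = p.coeff c + 2 * ∑ j ∈ range c, p.coeff j := by
  have hsymm : ∀ j ≤ 2 * c, p.coeff (2 * c - j) = p.coeff j := fun j hj => by
    conv_rhs => rw [← hp, coeff_reflect, revAt_le hj]
  have htail : ∑ j ∈ range c, p.coeff (c + (j + 1)) = ∑ j ∈ range c, p.coeff j := by
    rw [← sum_range_reflect]
    refine sum_congr rfl fun j hj => ?_
    rw [mem_range] at hj
    rw [← hsymm j (by omega)]
    congr 1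
    omega
  rw [eval_eq_sum_range' (n := c + (c + 1)) (by omega)]
  simp only [one_pow, mul_one, sum_range_add, sum_range_succ', add_zero, htail]
  ring

theorem reverse_cyclotomic_rat {n : ℕ} (hn : 1 < n) :
    (cyclotomic n ℚ).reverse = cyclotomic n ℚ := by
  obtain ⟨ζ, hζ⟩ : ∃ ζ : ℂ, IsPrimitiveRoot ζ n :=
    ⟨_, Complex.isPrimitiveRoot_exp n (by omega)⟩
  refine eq_of_monic_of_dvd_of_natDegree_le (cyclotomic.monic n ℚ) ?_ ?_ (reverse_natDegree_le _)
  · rw [Monic, reverse_leadingCoeff, trailingCoeff_eq_coeff_zero] <;>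
      simp [cyclotomic_coeff_zero ℚ hn]
  · have : Invertible ζ⁻¹ := invertibleOfNonzero (inv_ne_zero (hζ.ne_zero (by omega)))
    have hroot := (eval₂_reverse_eq_zero_iff (algebraMap ℚ ℂ) ζ⁻¹ (cyclotomic n ℚ)).mpr <| by
      rw [eval₂_eq_eval_map, map_cyclotomic]
      exact hζ.inv.isRoot_cyclotomic (by omega)
    rw [invOf_eq_inv, inv_inv, ← aeval_def] at hroot
    rw [cyclotomic_eq_minpoly_rat hζ (by omega)] at hroot ⊢
    exact minpoly.dvd ℚ ζ hroot

theorem reflect_totient_cyclotomic (R : Type*) [CommRing R] {n : ℕ} (hn : n ≠ 1) :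
    (cyclotomic n R).reflect n.totient = cyclotomic n R := by
  obtain rfl | hn : n = 0 ∨ 1 < n := by omega
  · simp
  have hℤ : (cyclotomic n ℤ).reflect n.totient = cyclotomic n ℤ := by
    apply map_injective (Int.castRingHom ℚ) Int.cast_injective
    rw [← reflect_map, map_cyclotomic, ← natDegree_cyclotomic n ℚ]
    exact reverse_cyclotomic_rat hn
  rw [← map_cyclotomic_int, reflect_map, hℤ]

theorem odd_eval_one_cyclotomic {n : ℕ} (hn : ¬∃ k, n = 2 ^ k) :
    Odd ((cyclotomic n ℤ).eval 1) := by
  by_cases hpow : ∃ p k, p.Prime ∧ p ^ k = n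
  · obtain ⟨p, _ | k, hp, rfl⟩ := hpow
    · exact absurd ⟨0, rfl⟩ hn
    have hp2 : p ≠ 2 := by
      rintro rfl
      exact hn ⟨k + 1, rfl⟩
    have := Fact.mk hp
    rw [eval_one_cyclotomic_prime_pow]
    exact_mod_cast hp.odd_of_ne_two hp2
  · rw [eval_one_cyclotomic_not_prime_pow fun hp k hk => hpow ⟨_, k, hp, hk⟩]
    exact odd_one

theorem coeff_cyclotomic_two_pow_totient_div_two (R : Type*) [CommRing R] (k : ℕ) :
    (cyclotomic (2 ^ (k + 2)) R).coeff ((2 ^ (k + 2)).totient / 2) = 0 := by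
  rw [cyclotomic_prime_pow_eq_geom_sum Nat.prime_two, Nat.totient_prime_pow_succ Nat.prime_two]
  simp [sum_range_succ, coeff_X_pow, coeff_one, pow_succ]

end Polynomial

theorem cyclotomic_middle_coeff (n : ℕ) (hn : 3 ≤ n) :
    (¬(∃ k, n = 2 ^ k) → Odd ((cyclotomic n ℤ).coeff (n.totient / 2))) ∧
      ((∃ k, n = 2 ^ k) → (cyclotomic n ℤ).coeff (n.totient / 2) = 0) := by
  refine ⟨fun hn2 => ?_, ?_⟩
  · obtain ⟨c, hc⟩ : Even n.totient := Nat.totient_even (by omega)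
    rw [← two_mul] at hc
    have heval := eval_one_eq_coeff_add_two_mul_sum_of_reflect_eq (p := cyclotomic n ℤ) (c := c)
      (by rw [natDegree_cyclotomic, hc]) (by rw [← hc, reflect_totient_cyclotomic ℤ (by omega)])
    have hodd := odd_eval_one_cyclotomic hn2
    rw [heval, Int.odd_add] at hodd
    rw [hc, Nat.mul_div_cancel_left c two_pos]
    exact hodd.mpr (even_two_mul _)
  · rintro ⟨_ | _ | k, rfl⟩
    · omega
    · omega
    · exact coeff_cyclotomic_two_pow_totient_div_two ℤ k
end

section
/- Define the n-th inverse cyclotomic polynomial Ψ_n(X) = (X^n − 1)/Φ_n(X). For all primes p < q, Ψ_{pq}(X) = ∑_{j=q}^{p+q-1} X^j − ∑_{j=0}^{p-1} X^j; in particular every coefficient of Ψ_{pq} lies in {-1, 0, 1}. -/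
/-!
The proper divisors of `pq` are `1, p, q`, so `Ψ_{pq} = Φ₁ Φ_p Φ_q = (X^q - 1)(1 + X + ⋯ + X^{p-1})`;
expanding this product gives the two geometric blocks, whose coefficients are `0` or `±1`.
-/

open Polynomial

/-- The `n`-th inverse cyclotomic polynomial `(X^n - 1) / Φ_n(X)`. -/
noncomputable def inverseCyclotomic (n : ℕ) : Polynomial ℤ :=
  (X ^ n - 1) /ₘ cyclotomic n ℤ

theorem Nat.properDivisors_prime_mul_prime {p q : ℕ} (hp : p.Prime) (hq : q.Prime) :
    (p * q).properDivisors = {1, p, q} := by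
  ext d
  simp only [Nat.mem_properDivisors, Finset.mem_insert, Finset.mem_singleton]
  constructor
  · rintro ⟨hd, hlt⟩
    obtain ⟨a, b, ha, hb, rfl⟩ := Nat.dvd_mul.1 hd
    rcases (Nat.dvd_prime hp).1 ha with rfl | rfl <;>
      rcases (Nat.dvd_prime hq).1 hb with rfl | rfl <;> simp_all
  · rintro (rfl | rfl | rfl) <;> refine ⟨by simp, ?_⟩ <;> nlinarith [hp.two_le, hq.two_le]

theorem X_pow_sub_one_divByMonic_cyclotomic {n : ℕ} (hn : 0 < n) (R : Type*) [CommRing R] :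
    (X ^ n - 1) /ₘ cyclotomic n R = ∏ d ∈ n.properDivisors, cyclotomic d R := by
  rw [← prod_cyclotomic_eq_X_pow_sub_one hn, ← Nat.cons_self_properDivisors hn.ne',
    Finset.prod_cons, mul_divByMonic_cancel_left _ (cyclotomic.monic n R)]

theorem inverseCyclotomic_prime_mul_prime {p q : ℕ} (hp : p.Prime) (hq : q.Prime) (hpq : p ≠ q) :
    inverseCyclotomic (p * q) = (X ^ q - 1) * cyclotomic p ℤ := by
  have := Fact.mk hq
  rw [inverseCyclotomic, X_pow_sub_one_divByMonic_cyclotomic (Nat.mul_pos hp.pos hq.pos),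
    Nat.properDivisors_prime_mul_prime hp hq,
    Finset.prod_insert (by simp [hp.one_lt.ne, hq.one_lt.ne]), Finset.prod_pair hpq,
    cyclotomic_one, ← cyclotomic_prime_mul_X_sub_one ℤ q]
  ring

theorem pow_sub_one_mul_geom_sum {R : Type*} [Ring R] (x : R) (p q : ℕ) :
    (x ^ q - 1) * ∑ i ∈ Finset.range p, x ^ i =
      ∑ j ∈ Finset.Ico q (p + q), x ^ j - ∑ i ∈ Finset.range p, x ^ i := by
  rw [sub_mul, one_mul, Finset.mul_sum, Finset.sum_Ico_eq_sum_range, add_tsub_cancel_right]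
  simp only [pow_add]

theorem abs_coeff_sum_X_pow_sub_sum_X_pow_le_one (s t : Finset ℕ) (k : ℕ) :
    |(∑ j ∈ s, (X : ℤ[X]) ^ j - ∑ j ∈ t, X ^ j).coeff k| ≤ 1 := by
  simp only [coeff_sub, finsetSum_coeff, coeff_X_pow, Finset.sum_ite_eq]
  split_ifs <;> simp

theorem inverseCyclotomic_binary (p q : ℕ) (hp : p.Prime) (hq : q.Prime) (hpq : p < q) :
    inverseCyclotomic (p * q) =
        (∑ j ∈ Finset.Ico q (p + q), X ^ j) - ∑ j ∈ Finset.range p, X ^ j ∧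
      ∀ j : ℕ, |(inverseCyclotomic (p * q)).coeff j| ≤ 1 := by
  have := Fact.mk hp
  have hΨ : inverseCyclotomic (p * q) =
      (∑ j ∈ Finset.Ico q (p + q), X ^ j) - ∑ j ∈ Finset.range p, X ^ j := by
    rw [inverseCyclotomic_prime_mul_prime hp hq hpq.ne, cyclotomic_prime, pow_sub_one_mul_geom_sum]
  exact ⟨hΨ, fun j => hΨ ▸ abs_coeff_sum_X_pow_sub_sum_X_pow_le_one _ _ j⟩
end
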